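/- arXiv:1407.0242 — 8 statements merged into one kernel-verified Lean document; each statement's English description precedes it below -/
import Mathlib

section
/- The formal power series identity ∑_{n≥1} E_{2n-1} z^{2n-1}/(2n-1)! = tan(z) holds, where E_{2n-1} is the number of alternating permutations of [2n-1]. -/
/-!
Cutting an alternating permutation of `[m+1]` at its maximum, which is preceded by an odd number
`p` of letters, leaves alternating arrangements of the `p` letters before it and of the `m - p`
letters after it, so `E (m+1) = ∑_{p odd} C(m,p) E p E (m-p)` for `m ≥ 1`. For `t m = E m / m!`
(`m` odd) and `t m = 0` (`m` even) this reads `(m+1) t (m+1) = [m = 0] + ∑_p t p t (m-p)`, i.e.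
`f = ∑ t m z^m`, which converges for `|z| < 1` since `E m ≤ m!`, solves `f' = 1 + f²`, `f 0 = 0`.
On the real interval this gives `arctan ∘ f = id`, so `f = tan` near `0`. Hence `∑ t m z^m` is the
Taylor series of the complex tangent at `0`, and it converges to `tan` on the disc `|z| < π/2`
where `tan` is holomorphic.
-/

open Function Equiv

def desSet {m : ℕ} (σ : Equiv.Perm (Fin m)) : Set ℕ :=
  {i | ∃ h : i < m, 0 < i ∧
    σ ⟨i, h⟩ < σ ⟨i - 1, lt_of_le_of_lt (Nat.sub_le i 1) h⟩}

noncomputable def altEuler (m : ℕ) : ℕ :=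
  Nat.card {σ : Equiv.Perm (Fin m) // desSet σ = {i | 0 < i ∧ i < m ∧ 2 ∣ i}}

section Alternating

variable {α β : Type*}

/-- `w 0 < w 1 > w 2 < ⋯` -/
def IsAlternating [LT α] {m : ℕ} (w : Fin m → α) : Prop :=
  ∀ k (h : k + 1 < m), w ⟨k + 1, h⟩ < w ⟨k, by omega⟩ ↔ Odd k

theorem StrictMono.isAlternating_comp_iff [LinearOrder α] [Preorder β] {f : α → β}
    (hf : StrictMono f) {m : ℕ} {w : Fin m → α} : IsAlternating (f ∘ w) ↔ IsAlternating w :=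
  forall₂_congr fun _ _ => by rw [Function.comp_apply, Function.comp_apply, hf.lt_iff_lt]

variable [Preorder α]

theorem IsAlternating.odd_of_forall_lt {m p : ℕ} {w : Fin m → α} (hw : IsAlternating w)
    (hm : 1 < m) (hp : p < m) (hmax : ∀ k : Fin m, (k : ℕ) ≠ p → w k < w ⟨p, hp⟩) : Odd p := by
  by_contra hev
  rcases Nat.eq_zero_or_pos p with rfl | hpos
  · exact (Nat.not_odd_zero ((hw 0 hm).mp (hmax ⟨1, hm⟩ one_ne_zero))).elim
  · have hdesc := (hw (p - 1) (by omega)).mpr (by grind)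
    simp only [Nat.sub_add_cancel hpos] at hdesc
    exact (hmax ⟨p - 1, by omega⟩ (show p - 1 ≠ p by omega)).asymm hdesc

theorem isAlternating_iff_of_forall_lt {m p q : ℕ} (hm : p + 1 + q = m) (hp : Odd p)
    {w : Fin m → α} (hmax : ∀ k : Fin m, (k : ℕ) ≠ p → w k < w ⟨p, by omega⟩) :
    IsAlternating w ↔ IsAlternating (fun k : Fin p => w ⟨k, by omega⟩) ∧
      IsAlternating (fun j : Fin q => w ⟨p + 1 + j, by omega⟩) := by
  have hpar : ∀ j, Odd (p + 1 + j) ↔ Odd j := fun j => by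
    rcases hp with ⟨r, rfl⟩
    simp only [Nat.odd_iff]
    omega
  constructor
  · intro hw
    refine ⟨fun k hk => hw k (by omega), fun j hj => ?_⟩
    rw [← hpar]
    exact hw (p + 1 + j) (by omega)
  · rintro ⟨hL, hR⟩ k hk
    rcases lt_trichotomy (k + 1) p with hlt | rfl | hgt
    · exact hL k hlt
    · exact iff_of_false (hmax ⟨k, by omega⟩ (show k ≠ k + 1 by omega)).asymm (by grind)
    · rcases (Nat.lt_succ_iff_lt_or_eq.mp hgt).symm with rfl | hlt
      · exact iff_of_true (hmax ⟨p + 1, hk⟩ (show p + 1 ≠ p by omega)) hp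
      · obtain ⟨j, rfl⟩ : ∃ j, k = p + 1 + j := ⟨k - (p + 1), by omega⟩
        rw [hpar]
        exact hR j (by omega)

end Alternating

theorem desSet_eq_iff_isAlternating {m : ℕ} (σ : Perm (Fin m)) :
    desSet σ = {i | 0 < i ∧ i < m ∧ 2 ∣ i} ↔ IsAlternating σ := by
  simp only [Set.ext_iff, desSet, Set.mem_ofPred_eq]
  constructor
  · intro h k hk
    have hk1 := h (k + 1)
    simp only [Nat.add_sub_cancel] at hk1
    constructor
    · intro hlt
      grind
    · intro hodd
      exact (hk1.mpr ⟨by omega, hk, by grind⟩).choose_spec.2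
  · intro h i
    constructor
    · rintro ⟨hi, hpos, hlt⟩
      obtain ⟨k, rfl⟩ : ∃ k, i = k + 1 := ⟨i - 1, by omega⟩
      grind [h k hi]
    · rintro ⟨hpos, hi, hdvd⟩
      obtain ⟨k, rfl⟩ : ∃ k, i = k + 1 := ⟨i - 1, by omega⟩
      exact ⟨hi, hpos, (h k hi).mpr (by grind)⟩

abbrev AltPerm (m : ℕ) := {σ : Perm (Fin m) // IsAlternating σ}

theorem altEuler_eq_card (m : ℕ) : altEuler m = Nat.card (AltPerm m) :=
  Nat.card_congr (subtypeEquivRight desSet_eq_iff_isAlternating)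

theorem altEuler_one : altEuler 1 = 1 := by
  rw [altEuler_eq_card, Nat.card_eq_one_iff_unique]
  exact ⟨⟨fun σ τ => Subtype.ext (Subsingleton.elim _ _)⟩, ⟨⟨1, fun k hk => by omega⟩⟩⟩

theorem altEuler_le_factorial (m : ℕ) : altEuler m ≤ m.factorial :=
  calc altEuler m = Nat.card (AltPerm m) := altEuler_eq_card m
    _ ≤ Nat.card (Perm (Fin m)) := Nat.card_le_card_of_injective _ Subtype.val_injective
    _ = m.factorial := by simp [Nat.card_eq_fintype_card, Fintype.card_perm]

section Standardize

variable {β : Type*} [LinearOrder β] {k : ℕ}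

theorem Finset.eq_and_eq_of_orderEmbOfFin_comp_eq {S S' : Finset β} (h : S.card = k)
    (h' : S'.card = k) {σ σ' : Perm (Fin k)}
    (he : S.orderEmbOfFin h ∘ σ = S'.orderEmbOfFin h' ∘ σ') : S = S' ∧ σ = σ' := by
  have hSS' : S = S' := by
    rw [← Finset.coe_inj, ← S.range_orderEmbOfFin h, ← S'.range_orderEmbOfFin h',
      ← σ.surjective.range_comp, he, σ'.surjective.range_comp]
  subst hSS'
  exact ⟨rfl, Equiv.ext fun i => (S.orderEmbOfFin h).injective (congrFun he i)⟩

theorem Finset.exists_perm_orderEmbOfFin_comp_eq {S : Finset β} (h : S.card = k)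
    {u : Fin k → β} (hu : Injective u) (hmem : ∀ i, u i ∈ S) :
    ∃ σ : Perm (Fin k), S.orderEmbOfFin h ∘ σ = u := by
  let v : Fin k → Fin k := fun i => (S.orderIsoOfFin h).symm ⟨u i, hmem i⟩
  have hv : Injective v := fun i j hij => hu (by simpa [v] using hij)
  refine ⟨Equiv.ofBijective v (Finite.injective_iff_bijective.mp hv), funext fun i => ?_⟩
  simp [v, ← Finset.coe_orderIsoOfFin_apply]

end Standardize

section GlueAtMax

variable {m p : ℕ} {S : Finset (Fin m)} (hS : S.card = p)

include hS in
theorem Finset.card_compl_of_card_eq : Sᶜ.card = m - p := by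
  rw [Finset.card_compl, Fintype.card_fin, hS]

/-- The word `L (m+1) R`, where `L` lists the elements of `S` in the pattern `σL` and `R` those of
`Sᶜ` in the pattern `σR`. -/
def glueAtMax (σL : Perm (Fin p)) (σR : Perm (Fin (m - p))) (k : Fin (m + 1)) : Fin (m + 1) :=
  if h : (k : ℕ) < p then (S.orderEmbOfFin hS (σL ⟨k, h⟩)).castSucc
  else if h' : (k : ℕ) = p then Fin.last m
  else (Sᶜ.orderEmbOfFin (Finset.card_compl_of_card_eq hS)
    (σR ⟨k - (p + 1), by have := k.isLt; omega⟩)).castSucc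

variable (σL : Perm (Fin p)) (σR : Perm (Fin (m - p)))

theorem glueAtMax_left (k : Fin p) :
    glueAtMax hS σL σR ⟨k, by have := hS ▸ card_finset_fin_le S; omega⟩ =
      (S.orderEmbOfFin hS (σL k)).castSucc := by
  simp [glueAtMax]

theorem glueAtMax_mid (hp : p ≤ m) : glueAtMax hS σL σR ⟨p, by omega⟩ = Fin.last m := by
  simp [glueAtMax]

theorem glueAtMax_right (j : Fin (m - p)) :
    glueAtMax hS σL σR ⟨p + 1 + j, by omega⟩ =
      (Sᶜ.orderEmbOfFin (Finset.card_compl_of_card_eq hS) (σR j)).castSucc := by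
  simp [glueAtMax, show ¬ p + 1 + (j : ℕ) < p by omega, show p + 1 + (j : ℕ) ≠ p by omega]

theorem glueAtMax_lt_last {k : Fin (m + 1)} (hk : (k : ℕ) ≠ p) :
    glueAtMax hS σL σR k < Fin.last m := by
  unfold glueAtMax
  split_ifs <;> exact Fin.castSucc_lt_last _

theorem glueAtMax_injective : Injective (glueAtMax hS σL σR) := by
  have hdisj : ∀ a b, S.orderEmbOfFin hS a ≠ Sᶜ.orderEmbOfFin (Finset.card_compl_of_card_eq hS) b :=
    fun a b hab => Finset.mem_compl.mp (Sᶜ.orderEmbOfFin_mem _ b) (hab ▸ S.orderEmbOfFin_mem hS a)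
  intro k k' h
  unfold glueAtMax at h
  split_ifs at h <;> simp [hdisj, (hdisj _ _).symm, Fin.castSucc_ne_last,
    (Fin.castSucc_ne_last _).symm] at h <;> exact Fin.ext (by omega)

end GlueAtMax

section SplitAtMax

variable {m p : ℕ}

theorem glueAtMax_inj {S S' : Finset (Fin m)} (hS : S.card = p) (hS' : S'.card = p)
    {σL σL' : Perm (Fin p)} {σR σR' : Perm (Fin (m - p))} :
    glueAtMax hS σL σR = glueAtMax hS' σL' σR' ↔ S = S' ∧ σL = σL' ∧ σR = σR' := by
  refine ⟨fun h => ?_, by rintro ⟨rfl, rfl, rfl⟩; rfl⟩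
  obtain ⟨rfl, rfl⟩ := Finset.eq_and_eq_of_orderEmbOfFin_comp_eq hS hS' (σ := σL) (σ' := σL')
    (funext fun k => Fin.castSucc_injective _ (by
      rw [Function.comp_apply, Function.comp_apply, ← glueAtMax_left hS, ← glueAtMax_left hS', h]))
  obtain ⟨-, rfl⟩ := Finset.eq_and_eq_of_orderEmbOfFin_comp_eq (Finset.card_compl_of_card_eq hS)
    (Finset.card_compl_of_card_eq hS) (σ := σR) (σ' := σR')
    (funext fun j => Fin.castSucc_injective _ (by
      rw [Function.comp_apply, Function.comp_apply, ← glueAtMax_right hS, ← glueAtMax_right hS, h]))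
  exact ⟨rfl, rfl, rfl⟩

theorem isAlternating_glueAtMax (hp : Odd p) {S : Finset (Fin m)} (hS : S.card = p)
    {σL : Perm (Fin p)} {σR : Perm (Fin (m - p))} (hL : IsAlternating σL)
    (hR : IsAlternating σR) : IsAlternating (glueAtMax hS σL σR) := by
  have hpm : p ≤ m := hS ▸ card_finset_fin_le S
  rw [isAlternating_iff_of_forall_lt (q := m - p) (by omega) hp
    fun k hk => (glueAtMax_mid hS σL σR hpm).symm ▸ glueAtMax_lt_last hS σL σR hk]
  constructor
  · have hleft : (fun k : Fin p => glueAtMax hS σL σR ⟨k, by omega⟩) =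
        Fin.castSucc ∘ S.orderEmbOfFin hS ∘ σL := funext (glueAtMax_left hS σL σR)
    rwa [hleft, Fin.strictMono_castSucc.isAlternating_comp_iff,
      (S.orderEmbOfFin hS).strictMono.isAlternating_comp_iff]
  · have hright : (fun j : Fin (m - p) => glueAtMax hS σL σR ⟨p + 1 + j, by omega⟩) =
        Fin.castSucc ∘ Sᶜ.orderEmbOfFin (Finset.card_compl_of_card_eq hS) ∘ σR :=
      funext (glueAtMax_right hS σL σR)
    rwa [hright, Fin.strictMono_castSucc.isAlternating_comp_iff,
      (Sᶜ.orderEmbOfFin _).strictMono.isAlternating_comp_iff]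

theorem exists_glueAtMax_eq (hp : Odd p) (hpm : p ≤ m) {σ : Perm (Fin (m + 1))}
    (hσ : IsAlternating σ) (hmax : σ ⟨p, by omega⟩ = Fin.last m) :
    ∃ (S : Finset (Fin m)) (hS : S.card = p) (σL : AltPerm p) (σR : AltPerm (m - p)),
      glueAtMax hS σL σR = σ := by
  have hne : ∀ k : Fin (m + 1), (k : ℕ) ≠ p → σ k ≠ Fin.last m := fun k hk h =>
    hk (congrArg Fin.val (σ.injective (h.trans hmax.symm)))
  let uL : Fin p → Fin m := fun k => (σ ⟨k, by omega⟩).castPred (hne _ k.isLt.ne)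
  let uR : Fin (m - p) → Fin m := fun j =>
    (σ ⟨p + 1 + j, by omega⟩).castPred (hne _ (show p + 1 + (j : ℕ) ≠ p by omega))
  have hleft : (fun k : Fin p => σ ⟨k, by omega⟩) = Fin.castSucc ∘ uL := by ext; simp [uL]
  have hright : (fun j : Fin (m - p) => σ ⟨p + 1 + j, by omega⟩) = Fin.castSucc ∘ uR := by
    ext; simp [uR]
  obtain ⟨hL, hR⟩ := (isAlternating_iff_of_forall_lt (q := m - p) (by omega) hp fun k hk =>
    hmax ▸ Fin.lt_last_iff_ne_last.mpr (hne k hk)).mp hσ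
  rw [hleft, Fin.strictMono_castSucc.isAlternating_comp_iff] at hL
  rw [hright, Fin.strictMono_castSucc.isAlternating_comp_iff] at hR
  have huL : Injective uL := fun k k' h =>
    Fin.ext (Fin.mk.inj_iff.mp (σ.injective (Fin.castPred_inj.mp h)))
  have huR : Injective uR := fun j j' h =>
    Fin.ext (Nat.add_left_cancel (congrArg Fin.val (σ.injective (Fin.castPred_inj.mp h))))
  let S := Finset.univ.image uL
  have hS : S.card = p := by rw [Finset.card_image_of_injective _ huL, Finset.card_fin]
  obtain ⟨σL, hσL⟩ := S.exists_perm_orderEmbOfFin_comp_eq hS huL fun k =>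
    Finset.mem_image_of_mem _ (Finset.mem_univ k)
  obtain ⟨σR, hσR⟩ := Sᶜ.exists_perm_orderEmbOfFin_comp_eq (Finset.card_compl_of_card_eq hS) huR
    fun j => Finset.mem_compl.mpr fun hj => by
      obtain ⟨k, -, hk⟩ := Finset.mem_image.mp hj
      have := congrArg Fin.val (σ.injective (Fin.castPred_inj.mp hk))
      simp at this
      omega
  rw [← hσL, (S.orderEmbOfFin hS).strictMono.isAlternating_comp_iff] at hL
  rw [← hσR, (Sᶜ.orderEmbOfFin _).strictMono.isAlternating_comp_iff] at hR
  refine ⟨S, hS, ⟨σL, hL⟩, ⟨σR, hR⟩, funext fun ⟨k, hk⟩ => ?_⟩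
  rcases lt_trichotomy k p with hkp | rfl | hkp
  · exact (glueAtMax_left hS σL σR ⟨k, hkp⟩).trans <|
      (congrArg Fin.castSucc (congrFun hσL _)).trans (congrFun hleft ⟨k, hkp⟩).symm
  · exact (glueAtMax_mid hS σL σR hpm).trans hmax.symm
  · obtain ⟨j, rfl⟩ : ∃ j, k = p + 1 + j := ⟨k - (p + 1), by omega⟩
    exact (glueAtMax_right hS σL σR ⟨j, by omega⟩).trans <|
      (congrArg Fin.castSucc (congrFun hσR _)).trans (congrFun hright ⟨j, by omega⟩).symm

theorem card_altPerm_symm_last_eq (hm : 1 ≤ m) (hpm : p ≤ m) :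
    Nat.card {σ : AltPerm (m + 1) // (σ.1.symm (Fin.last m) : ℕ) = p} =
      if Odd p then m.choose p * (altEuler p * altEuler (m - p)) else 0 := by
  have hmax_iff : ∀ σ : Perm (Fin (m + 1)),
      (σ.symm (Fin.last m) : ℕ) = p ↔ σ ⟨p, by omega⟩ = Fin.last m := fun σ => by
    rw [← Equiv.eq_symm_apply, eq_comm, Fin.ext_iff]
  split_ifs with hp
  · let Φ : {S : Finset (Fin m) // S.card = p} × AltPerm p × AltPerm (m - p) →
        {σ : AltPerm (m + 1) // (σ.1.symm (Fin.last m) : ℕ) = p} := fun t =>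
      ⟨⟨.ofBijective _ (Finite.injective_iff_bijective.mp (glueAtMax_injective t.1.2 t.2.1 t.2.2)),
        isAlternating_glueAtMax hp t.1.2 t.2.1.2 t.2.2.2⟩,
        (hmax_iff _).mpr (glueAtMax_mid t.1.2 _ _ hpm)⟩
    have hΦ : Bijective Φ := by
      refine ⟨fun ⟨⟨S, hS⟩, σL, σR⟩ ⟨⟨S', hS'⟩, σL', σR'⟩ h => ?_, fun ⟨⟨σ, hσ⟩, hσp⟩ => ?_⟩
      · obtain ⟨rfl, h₁, h₂⟩ := (glueAtMax_inj hS hS').mp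
          (congrArg (fun τ : {σ : AltPerm (m + 1) // _} => ⇑τ.1.1) h)
        obtain rfl := Subtype.ext h₁
        obtain rfl := Subtype.ext h₂
        rfl
      · obtain ⟨S, hS, σL, σR, h⟩ := exists_glueAtMax_eq hp hpm hσ ((hmax_iff σ).mp hσp)
        exact ⟨⟨⟨S, hS⟩, σL, σR⟩, Subtype.ext (Subtype.ext (Equiv.ext (congrFun h)))⟩
    rw [← Nat.card_eq_of_bijective Φ hΦ, Nat.card_prod, Nat.card_prod, ← altEuler_eq_card,
      ← altEuler_eq_card, Nat.card_eq_fintype_card, Fintype.card_finset_len, Fintype.card_fin]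
  · have : IsEmpty {σ : AltPerm (m + 1) // (σ.1.symm (Fin.last m) : ℕ) = p} :=
      ⟨fun ⟨σ, hσ⟩ => hp <| σ.2.odd_of_forall_lt (by omega) (by omega) fun k hk =>
        (hmax_iff σ.1).mp hσ ▸ Fin.lt_last_iff_ne_last.mpr fun h => hk (by rw [← hσ, ← h]; simp)⟩
    exact Nat.card_of_isEmpty

end SplitAtMax

theorem altEuler_succ {m : ℕ} (hm : 1 ≤ m) :
    altEuler (m + 1) = ∑ p ∈ Finset.range (m + 1),
      if Odd p then m.choose p * (altEuler p * altEuler (m - p)) else 0 := by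
  rw [altEuler_eq_card, ← Nat.card_congr (Equiv.sigmaFiberEquiv
    fun σ : AltPerm (m + 1) => σ.1.symm (Fin.last m)), Nat.card_sigma,
    ← Fin.sum_univ_eq_sum_range]
  refine Finset.sum_congr rfl fun q _ => ?_
  rw [← card_altPerm_symm_last_eq hm (Nat.lt_succ_iff.mp q.isLt)]
  exact Nat.card_congr (Equiv.subtypeEquivRight fun σ => Fin.val_inj.symm)

noncomputable def tanCoeff (m : ℕ) : ℝ := if Odd m then altEuler m / m.factorial else 0

theorem abs_tanCoeff_le_one (m : ℕ) : |tanCoeff m| ≤ 1 := by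
  unfold tanCoeff
  split_ifs
  · rw [abs_of_nonneg (by positivity), div_le_one (by positivity)]
    exact_mod_cast altEuler_le_factorial m
  · simp

theorem tanCoeff_mul_tanCoeff {m p : ℕ} (hm : Even m) (hpm : p ≤ m) :
    tanCoeff p * tanCoeff (m - p) =
      ((if Odd p then m.choose p * (altEuler p * altEuler (m - p)) else 0 : ℕ) : ℝ) /
        m.factorial := by
  unfold tanCoeff
  split_ifs with hp hmp hmp
  · push_cast
    rw [Nat.cast_choose ℝ hpm]
    field_simp
  · exact absurd ((Nat.odd_sub hpm).mpr (by grind)) hmp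
  all_goals simp

theorem succ_mul_tanCoeff_succ (m : ℕ) :
    (m + 1) * tanCoeff (m + 1) =
      (if m = 0 then 1 else 0) + ∑ p ∈ Finset.range (m + 1), tanCoeff p * tanCoeff (m - p) := by
  rcases Nat.even_or_odd m with hm | hm
  · rcases Nat.eq_zero_or_pos m with rfl | hpos
    · simp [tanCoeff, altEuler_one]
    rw [if_neg hpos.ne', zero_add, Finset.sum_congr rfl fun p hp =>
      tanCoeff_mul_tanCoeff hm (Nat.lt_succ_iff.mp (Finset.mem_range.mp hp)), ← Finset.sum_div,
      ← Nat.cast_sum, ← altEuler_succ hpos, tanCoeff, if_pos hm.add_one, Nat.factorial_succ]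
    push_cast
    field_simp
  · have hzero : ∀ p ∈ Finset.range (m + 1), tanCoeff p * tanCoeff (m - p) = 0 := fun p hp => by
      have := Finset.mem_range.mp hp
      unfold tanCoeff
      split_ifs <;> grind
    rw [Finset.sum_eq_zero hzero, if_neg (by grind), tanCoeff, if_neg (by grind)]
    simp

open FormalMultilinearSeries in
theorem FormalMultilinearSeries.hasSum_deriv_ofScalars_sum {𝕜 : Type*}
    [NontriviallyNormedField 𝕜] [CompleteSpace 𝕜] (c : ℕ → 𝕜) {z : 𝕜}
    (hz : ‖z‖ₑ < (ofScalars 𝕜 c).radius) :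
    HasSum (fun n => (n + 1) * c (n + 1) * z ^ n) (deriv (ofScalars 𝕜 c).sum z) := by
  have hf := ((ofScalars 𝕜 c).hasFPowerSeriesOnBall (pos_of_gt hz)).fderiv
  have hsum := (hf.hasSum (mem_eball_zero_iff.mpr hz)).mapL (ContinuousLinearMap.apply 𝕜 𝕜 1)
  rw [zero_add, ContinuousLinearMap.apply_apply, fderiv_apply_one_eq_deriv] at hsum
  have hterm : ∀ n : ℕ, ContinuousLinearMap.apply 𝕜 𝕜 1 ((ofScalars 𝕜 c).derivSeries n fun _ => z) =
      (n + 1) * c (n + 1) * z ^ n := fun n => by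
    rw [ContinuousLinearMap.apply_apply, apply_eq_pow_smul_coeff, FunLike.coe_smul,
      Pi.smul_apply, derivSeries_coeff_one, coeff_ofScalars, nsmul_eq_mul, smul_eq_mul]
    push_cast
    ring
  simpa only [hterm] using hsum

section TanSeries

variable (𝕜 : Type*) [RCLike 𝕜]

noncomputable def tanSeries : FormalMultilinearSeries 𝕜 𝕜 𝕜 :=
  .ofScalars 𝕜 fun m => (tanCoeff m : 𝕜)

theorem one_le_radius_tanSeries : 1 ≤ (tanSeries 𝕜).radius := by
  have h := (tanSeries 𝕜).le_radius_of_bound 1 (r := 1) fun n => by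
    rw [tanSeries, FormalMultilinearSeries.ofScalars_norm, RCLike.norm_ofReal]
    simpa using abs_tanCoeff_le_one n
  simpa using h

theorem hasFPowerSeriesOnBall_tanSeries :
    HasFPowerSeriesOnBall (tanSeries 𝕜).sum (tanSeries 𝕜) 0 1 :=
  ((tanSeries 𝕜).hasFPowerSeriesOnBall (zero_lt_one.trans_le (one_le_radius_tanSeries 𝕜))).mono
    zero_lt_one (one_le_radius_tanSeries 𝕜)

variable {𝕜}

theorem hasSum_tanSeries {z : 𝕜} (hz : ‖z‖ < 1) :
    HasSum (fun m => (tanCoeff m : 𝕜) * z ^ m) ((tanSeries 𝕜).sum z) := by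
  have h := (hasFPowerSeriesOnBall_tanSeries 𝕜).hasSum (y := z) (by
    simpa [mem_eball_zero_iff, ← ofReal_norm] using hz)
  simpa [tanSeries, FormalMultilinearSeries.ofScalars_apply_eq, mul_comm] using h

theorem hasDerivAt_tanSeries_sum {z : 𝕜} (hz : ‖z‖ < 1) :
    HasDerivAt (tanSeries 𝕜).sum (1 + (tanSeries 𝕜).sum z ^ 2) z := by
  have hmem : z ∈ Metric.eball (0 : 𝕜) 1 := by simpa [mem_eball_zero_iff, ← ofReal_norm] using hz
  have hderiv := (FormalMultilinearSeries.hasSum_deriv_ofScalars_sum _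
    (lt_of_lt_of_le (mem_eball_zero_iff.mp hmem) (one_le_radius_tanSeries 𝕜)))
  have hnorm : Summable fun m => ‖(tanCoeff m : 𝕜) * z ^ m‖ :=
    .of_nonneg_of_le (fun _ => norm_nonneg _) (fun m => by
      rw [norm_mul, norm_pow, RCLike.norm_ofReal]
      exact mul_le_of_le_one_left (by positivity) (abs_tanCoeff_le_one m))
      (summable_geometric_of_lt_one (norm_nonneg z) hz)
  have hsq := (hasSum_ite_eq 0 (1 : 𝕜)).add (hasSum_sum_range_mul_of_summable_norm hnorm hnorm)
  rw [(hasSum_tanSeries hz).tsum_eq, ← sq] at hsq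
  have hterm : ∀ n : ℕ, (n + 1) * (tanCoeff (n + 1) : 𝕜) * z ^ n =
      ((if n = 0 then 1 else 0) + ∑ p ∈ Finset.range (n + 1),
        (tanCoeff p : 𝕜) * z ^ p * ((tanCoeff (n - p) : 𝕜) * z ^ (n - p))) := fun n => by
    have h := congrArg (fun r : ℝ => (r : 𝕜) * z ^ n) (succ_mul_tanCoeff_succ n)
    push_cast at h
    rw [h, add_mul, Finset.sum_mul]
    congr 1
    · split_ifs with h0 <;> simp [h0]
    · refine Finset.sum_congr rfl fun p hp => ?_
      rw [← pow_mul_pow_sub z (Nat.lt_succ_iff.mp (Finset.mem_range.mp hp))]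
      ring
  simp only [← hterm] at hsq
  rw [← hderiv.unique hsq]
  exact ((hasFPowerSeriesOnBall_tanSeries 𝕜).analyticAt_of_mem hmem).differentiableAt.hasDerivAt

end TanSeries

theorem eqOn_tan_of_hasDerivAt {g : ℝ → ℝ} {s : Set ℝ} (hs : IsOpen s) (hs' : IsPreconnected s)
    (h0 : 0 ∈ s) (hg0 : g 0 = 0) (hg : ∀ y ∈ s, HasDerivAt g (1 + g y ^ 2) y) :
    Set.EqOn g Real.tan s := by
  have harctan : ∀ y ∈ s, HasDerivAt (Real.arctan ∘ g) 1 y := fun y hy => by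
    have h := (Real.hasDerivAt_arctan (g y)).comp y (hg y hy)
    rwa [one_div, inv_mul_cancel₀ (by positivity)] at h
  have heq := hs.eqOn_of_deriv_eq hs'
    (fun y hy => (harctan y hy).differentiableAt.differentiableWithinAt) differentiableOn_id
    (fun y hy => by simp [(harctan y hy).deriv]) h0 (by simp [hg0])
  intro y hy
  rw [← Real.tan_arctan (g y)]
  exact congrArg Real.tan (heq hy)

theorem tanSeries_sum_eq_tan {y : ℝ} (hy : |y| < 1) : (tanSeries ℝ).sum y = Real.tan y := by
  refine eqOn_tan_of_hasDerivAt (s := Set.Ioo (-1) 1) isOpen_Ioo isPreconnected_Ioo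
    (by norm_num) ?_ (fun y hy => hasDerivAt_tanSeries_sum (abs_lt.mpr hy)) (abs_lt.mp hy)
  exact (FormalMultilinearSeries.ofScalarsSum_zero _).trans (by simp [tanCoeff])

theorem Complex.differentiableAt_tan_of_norm_lt {z : ℂ} (hz : ‖z‖ < Real.pi / 2) :
    DifferentiableAt ℂ Complex.tan z := by
  refine Complex.differentiableAt_tan.mpr <| Complex.cos_ne_zero_iff.mpr fun k hk => hz.not_ge ?_
  have h1 : (1 : ℤ) ≤ |2 * k + 1| := Int.one_le_abs (by omega)
  have : (1 : ℝ) ≤ |2 * (k : ℝ) + 1| := by exact_mod_cast h1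
  rw [hk, show (2 * k + 1) * Real.pi / 2 = (((2 * k + 1) * Real.pi / 2 : ℝ) : ℂ) by push_cast; ring,
    Complex.norm_real, Real.norm_eq_abs, abs_div, abs_mul, abs_of_pos Real.pi_pos, abs_two]
  nlinarith [Real.pi_pos]

theorem tanSeries_sum_ofReal_eq_tan {t : ℝ} (ht : |t| < 1) :
    (tanSeries ℂ).sum t = Complex.tan t := by
  rw [← Complex.ofReal_tan, ← tanSeries_sum_eq_tan ht]
  refine (hasSum_tanSeries (by rwa [Complex.norm_real, Real.norm_eq_abs])).unique ?_
  have := Complex.hasSum_ofReal.mpr (hasSum_tanSeries (𝕜 := ℝ) (by rwa [Real.norm_eq_abs]))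
  simpa using this

open Filter Topology in
theorem hasFPowerSeriesAt_tan : HasFPowerSeriesAt Complex.tan (tanSeries ℂ) 0 := by
  have hG := (hasFPowerSeriesOnBall_tanSeries ℂ).hasFPowerSeriesAt
  have htan : AnalyticAt ℂ Complex.tan 0 :=
    DifferentiableOn.analyticAt (s := Metric.ball 0 (Real.pi / 2))
      (fun z hz => (Complex.differentiableAt_tan_of_norm_lt
        (mem_ball_zero_iff.mp hz)).differentiableWithinAt)
      (Metric.ball_mem_nhds 0 (by positivity))
  refine (hG.analyticAt.eventually_eq_or_eventually_ne htan).elim hG.congr fun hne => ?_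
  have hreal : ∀ᶠ t : ℝ in 𝓝[≠] 0, (tanSeries ℂ).sum t = Complex.tan t :=
    nhdsWithin_le_nhds <| ((continuous_abs.tendsto (0 : ℝ)).eventually
      (gt_mem_nhds (by simp : |(0 : ℝ)| < 1))).mono fun t ht => tanSeries_sum_ofReal_eq_tan ht
  have hmap : Tendsto (fun t : ℝ => (t : ℂ)) (𝓝[≠] 0) (𝓝[≠] 0) :=
    Complex.continuous_ofReal.continuousWithinAt.tendsto_nhdsWithin fun t ht => by simpa using ht
  obtain ⟨z, hz, hz'⟩ := ((hmap.frequently (p := fun z => (tanSeries ℂ).sum z = Complex.tan z)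
    hreal.frequently).and_eventually hne).exists
  exact absurd hz hz'

theorem hasSum_tanCoeff_mul_pow {z : ℂ} (hz : ‖z‖ < Real.pi / 2) :
    HasSum (fun m => (tanCoeff m : ℂ) * z ^ m) (Complex.tan z) := by
  obtain ⟨R, hzR, hRπ⟩ := exists_between hz
  lift R to NNReal using (norm_nonneg z).trans hzR.le
  have hp := DifferentiableOn.hasFPowerSeriesOnBall (c := 0) (R := R)
    (fun w hw => (Complex.differentiableAt_tan_of_norm_lt
      ((mem_closedBall_zero_iff.mp hw).trans_lt hRπ)).differentiableWithinAt)
    (by exact_mod_cast (norm_nonneg z).trans_lt hzR)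
  rw [← hasFPowerSeriesAt_tan.eq_formalMultilinearSeries hp.hasFPowerSeriesAt] at hp
  have := hp.hasSum (y := z) (by simpa [mem_eball_zero_iff, ← ofReal_norm] using hzR)
  simpa [tanSeries, FormalMultilinearSeries.ofScalars_apply_eq, mul_comm] using this

/-- `∑_{n ≥ 1} E_{2n-1} z^{2n-1}/(2n-1)! = tan z`, where `E_{2n-1}` is the number of
alternating permutations of `[2n-1]`. -/
theorem stmt_1 (x : ℝ) (hx : |x| < Real.pi / 2) :
    HasSum (fun n : ℕ =>
      (altEuler (2 * n + 1) : ℝ) * x ^ (2 * n + 1) / (Nat.factorial (2 * n + 1) : ℝ))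
      (Real.tan x) := by
  have hsum : HasSum (fun m => tanCoeff m * x ^ m) (Real.tan x) := by
    have h := hasSum_tanCoeff_mul_pow (z := x) (by rwa [Complex.norm_real, Real.norm_eq_abs])
    rw [← Complex.ofReal_tan] at h
    exact Complex.hasSum_ofReal.mp (by exact_mod_cast h)
  have hodd : ∀ m ∉ Set.range (fun n : ℕ => 2 * n + 1), tanCoeff m * x ^ m = 0 := fun m hm => by
    rw [tanCoeff, if_neg fun ⟨k, hk⟩ => hm ⟨k, hk.symm⟩, zero_mul]
  have h := (Function.Injective.hasSum_iff (fun a b h => by simpa using h) hodd).mpr hsum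
  simpa [tanCoeff, div_mul_eq_mul_div, Function.comp_def] using h
end

section
/- Define the sequence r_n by ∑_{n≥1} r_n z^{rn}/(rn)! = -log(∑_{n≥0} (-1)^n z^{rn}/(rn)!). Then each r_n is an integer. -/
/-!
Read through exponential coefficients `f_k = k! [z^k] f`, the equation `g L' = -g'` with `g_0 = 1`
becomes the recursion `L_{k+1} = -g_{k+1} - ∑_{0<i≤k} (k choose i) g_i L_{k+1-i}`. Its coefficients
are binomial, so the exponential coefficients of `L` lie in any subring containing those of `g`.
Here `g_{rn} = (-1)^n`, all other `g_k` vanish, and `L_{rn} = r_n`.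
-/

open PowerSeries

namespace PowerSeries

open Finset Nat

variable {R : Type*} [CommRing R]

noncomputable def egfCoeff (k : ℕ) (f : R⟦X⟧) : R := k ! * coeff k f

theorem egfCoeff_mul (k : ℕ) (f h : R⟦X⟧) :
    egfCoeff k (f * h) =
      ∑ i ∈ range (k + 1), (k.choose i : R) * egfCoeff i f * egfCoeff (k - i) h := by
  rw [egfCoeff, coeff_mul, Nat.sum_antidiagonal_eq_sum_range_succ_mk, mul_sum]
  refine sum_congr rfl fun i hi => ?_
  obtain ⟨j, rfl⟩ := Nat.exists_eq_add_of_le (Nat.lt_succ_iff.mp (mem_range.mp hi))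
  rw [egfCoeff, egfCoeff, Nat.add_sub_cancel_left, ← add_choose_mul_factorial_mul_factorial,
    ← choose_symm_add]
  push_cast
  ring

theorem egfCoeff_zero (f : R⟦X⟧) : egfCoeff 0 f = coeff 0 f := by
  simp [egfCoeff]

theorem egfCoeff_neg (k : ℕ) (f : R⟦X⟧) : egfCoeff k (-f) = -egfCoeff k f := by
  simp [egfCoeff]

theorem egfCoeff_derivative (k : ℕ) (f : R⟦X⟧) :
    egfCoeff k (d⁄dX R f) = egfCoeff (k + 1) f := by
  rw [egfCoeff, egfCoeff, coeff_derivative, factorial_succ]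
  push_cast
  ring

theorem egfCoeff_succ_mem_of_mul_derivative_eq_neg (S : Subring R) {g L : R⟦X⟧}
    (hgS : ∀ k, egfCoeff k g ∈ S) (hg0 : coeff 0 g = 1)
    (hlog : g * d⁄dX R L = -d⁄dX R g) (k : ℕ) : egfCoeff (k + 1) L ∈ S := by
  induction k using Nat.strong_induction_on with
  | _ k ih =>
    have hk := congrArg (egfCoeff k) hlog
    simp only [egfCoeff_mul, sum_range_succ', egfCoeff_neg, egfCoeff_derivative] at hk
    have hrec : egfCoeff (k + 1) L = -egfCoeff (k + 1) g -
        ∑ i ∈ range k, (k.choose (i + 1) : R) * egfCoeff (i + 1) g *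
          egfCoeff (k - (i + 1) + 1) L := by
      simp only [choose_zero_right, egfCoeff_zero, hg0, Nat.sub_zero, Nat.cast_one, one_mul] at hk
      linear_combination hk
    rw [hrec]
    refine sub_mem (neg_mem (hgS _)) (sum_mem fun i hi => ?_)
    exact mul_mem (mul_mem (natCast_mem S _) (hgS _)) (ih _ (by grind))

end PowerSeries

/-- Fix `r ≥ 1`. If `∑_{n≥1} r_n z^{rn}/(rn)! = -log (∑_{n≥0} (-1)^n z^{rn}/(rn)!)` as
formal power series over `ℚ` (the logarithm characterized by: the left side `L` has
constant term `0` and `g * L' = -g'` where `g` is the series being logarithmed), then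
each `r_n` is an integer. -/
theorem stmt_4 (r : ℕ) (hr : 1 ≤ r) (rseq : ℕ → ℚ)
    (L g : PowerSeries ℚ)
    (hL : L = PowerSeries.mk fun k =>
      if r ∣ k ∧ k ≠ 0 then rseq (k / r) / (Nat.factorial k : ℚ) else 0)
    (hg : g = PowerSeries.mk fun k =>
      if r ∣ k then (-1 : ℚ) ^ (k / r) / (Nat.factorial k : ℚ) else 0)
    (hlog : g * L.derivativeFun = -g.derivativeFun) :
    ∀ n : ℕ, 1 ≤ n → ∃ m : ℤ, rseq n = (m : ℚ) := by
  intro n hn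
  have hrn : 0 < r * n := Nat.mul_pos hr hn
  have hg0 : coeff 0 g = 1 := by simp [hg]
  have hgZ : ∀ k, egfCoeff k g ∈ (⊥ : Subring ℚ) := by
    intro k
    rw [hg, egfCoeff, coeff_mk]
    split_ifs
    · rw [mul_div_cancel₀ _ (by positivity)]
      exact pow_mem (neg_mem (one_mem _)) _
    · simp
  have hLn : egfCoeff (r * n) L = rseq n := by
    rw [hL, egfCoeff, coeff_mk, if_pos ⟨dvd_mul_right r n, hrn.ne'⟩,
      Nat.mul_div_cancel_left n hr, mul_div_cancel₀ _ (by positivity)]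
  have hLZ := egfCoeff_succ_mem_of_mul_derivative_eq_neg ⊥ hgZ hg0 hlog (r * n - 1)
  rw [Nat.sub_add_cancel hrn, hLn, Subring.mem_bot] at hLZ
  obtain ⟨m, hm⟩ := hLZ
  exact ⟨m, hm.symm⟩
end

section
/- Define the sequence r_n by ∑_{n≥1} r_n z^{rn}/(rn)! = -log(∑_{n≥0} (-1)^n z^{rn}/(rn)!). Then r_n equals the generalized Euler number E_{rn-1}, the number of permutations of [rn-1] with descent set {r, 2r, ..., rn-r}. -/
/-!
Comparing the coefficients of `z ^ (r n - 1)` in `g * L' = -g'` gives the triangular recurrence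
`∑_{k<n} (-1)^k C(rn-1, rk) r_{n-k} = (-1)^(n-1)`, which determines the `r_n`. The Euler numbers
satisfy the same recurrence. Fix `N = rn - 1` and let `E'_k` count the permutations of `[N]` with
descent set exactly `{rj : k < j < n}`. A permutation of `[N]` increasing on its first `rk`
positions is the same as the set of its first `rk` values together with the relative order of
the remaining `N - rk` values, and its descents beyond `rk` are those of that order, shifted. So
`C(N, rk) E_{N-rk} = E'_k + E'_{k-1}` (with `E'_{-1} = 0`), according to whether `rk` is a
descent, and the alternating sum telescopes to `(-1)^(n-1) E'_{n-1} = (-1)^(n-1)`: only the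
identity has no descents.
-/

open PowerSeries

/-- The generalized Euler number: the number of permutations of `[m]` whose descent
set is exactly the set of positive multiples of `r` below `m`. -/
noncomputable def genEuler (r m : ℕ) : ℕ :=
  Nat.card {σ : Equiv.Perm (Fin m) // desSet σ = {i | 0 < i ∧ i < m ∧ r ∣ i}}

open scoped Nat

lemma Set.subset_Ici_and_sdiff_singleton_eq_iff {α : Type*} [Preorder α] {a : α} {D T : Set α}
    (hT : T ⊆ Set.Ioi a) : D ⊆ Set.Ici a ∧ D \ {a} = T ↔ D = T ∨ D = insert a T := by
  have haT : a ∉ T := fun h => lt_irrefl a (hT h)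
  constructor
  · rintro ⟨-, rfl⟩
    by_cases ha : a ∈ D
    · exact .inr (by rw [Set.insert_sdiff_singleton, Set.insert_eq_of_mem ha])
    · exact .inl (Set.sdiff_singleton_eq_self ha).symm
  · rintro (rfl | rfl)
    · exact ⟨hT.trans Set.Ioi_subset_Ici_self, Set.sdiff_singleton_eq_self haT⟩
    · exact ⟨Set.insert_subset le_rfl (hT.trans Set.Ioi_subset_Ici_self),
        Set.insert_sdiff_self_of_notMem haT⟩

lemma Finset.sum_range_mul_eq_sum_range_of_not_dvd {M : Type*} [AddCommMonoid M] {r : ℕ}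
    (hr : 0 < r) (f : ℕ → M) (hf : ∀ j, ¬ r ∣ j → f j = 0) (n : ℕ) :
    ∑ j ∈ Finset.range (r * n), f j = ∑ k ∈ Finset.range n, f (r * k) := by
  induction n with
  | zero => simp
  | succ n ih =>
    rw [mul_add_one, Finset.sum_range_add, ih, Finset.sum_range_succ,
      Finset.sum_eq_single_of_mem 0 (Finset.mem_range.mpr hr) fun i hi hi0 => hf _ ?_, add_zero]
    exact fun hdvd => hi0 <| Nat.eq_zero_of_dvd_of_lt
      ((Nat.dvd_add_right (dvd_mul_right r n)).mp hdvd) (Finset.mem_range.mp hi)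

lemma sum_range_succ_neg_one_pow_mul_eq {R : Type*} [Ring R] (F E : ℕ → R) (n : ℕ)
    (h0 : F 0 = E 0) (hsucc : ∀ k < n, F (k + 1) = E (k + 1) + E k) :
    ∑ k ∈ Finset.range (n + 1), (-1) ^ k * F k = (-1) ^ n * E n := by
  induction n with
  | zero => simp [h0]
  | succ n ih =>
    rw [Finset.sum_range_succ, ih fun k hk => hsucc k (by omega), hsucc n n.lt_succ_self,
      pow_succ]
    noncomm_ring

lemma eq_of_sum_range_succ_mul_eq {R : Type*} [Ring R] (c : ℕ → ℕ → R) (b x y : ℕ → R)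
    (hc : ∀ n, c n 0 = 1)
    (hx : ∀ n, ∑ k ∈ Finset.range (n + 1), c n k * x (n + 1 - k) = b n)
    (hy : ∀ n, ∑ k ∈ Finset.range (n + 1), c n k * y (n + 1 - k) = b n) (n : ℕ) :
    x (n + 1) = y (n + 1) := by
  induction n using Nat.strong_induction_on with
  | _ n ih =>
    have h := (hx n).trans (hy n).symm
    have htail : ∀ k ∈ Finset.range n,
        c n (k + 1) * x (n + 1 - (k + 1)) = c n (k + 1) * y (n + 1 - (k + 1)) := fun k hk => by
      have hk := Finset.mem_range.mp hk
      rw [show n + 1 - (k + 1) = n - k - 1 + 1 by omega, ih (n - k - 1) (by omega)]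
    rw [Finset.sum_range_succ', Finset.sum_range_succ', Finset.sum_congr rfl htail, hc] at h
    simpa using h

section Descents

variable {m : ℕ} {σ : Equiv.Perm (Fin m)}

lemma mem_desSet {i : ℕ} (h : i < m) :
    i ∈ desSet σ ↔ 0 < i ∧ σ ⟨i, h⟩ < σ ⟨i - 1, by omega⟩ :=
  ⟨fun ⟨_, hi, hlt⟩ => ⟨hi, hlt⟩, fun ⟨hi, hlt⟩ => ⟨h, hi, hlt⟩⟩

lemma pos_and_lt_of_mem_desSet {i : ℕ} (h : i ∈ desSet σ) : 0 < i ∧ i < m :=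
  ⟨h.2.1, h.1⟩

lemma apply_lt_apply_succ_of_notMem_desSet {i : ℕ} (h : i + 1 < m) (hi : i + 1 ∉ desSet σ) :
    σ ⟨i, by omega⟩ < σ ⟨i + 1, h⟩ := by
  simp only [mem_desSet h, not_and, not_lt] at hi
  refine lt_of_le_of_ne (hi i.succ_pos) fun heq => ?_
  simpa using σ.injective heq

lemma strictMono_castLE_of_desSet_subset {a : ℕ} (ha : a ≤ m) (h : desSet σ ⊆ Set.Ici a) :
    StrictMono fun i : Fin a => σ (Fin.castLE ha i) := by
  cases a with
  | zero => exact fun i => i.elim0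
  | succ b =>
    refine Fin.strictMono_iff_lt_succ.mpr fun i => ?_
    exact apply_lt_apply_succ_of_notMem_desSet _ fun hi => by
      have : b + 1 ≤ (i : ℕ) + 1 := h hi
      omega

lemma desSet_one : desSet (1 : Equiv.Perm (Fin m)) = ∅ :=
  Set.eq_empty_of_forall_notMem fun i ⟨_, _, hlt⟩ =>
    absurd (show i < i - 1 from hlt) (by omega)

lemma card_desSet_eq_empty_eq_one : Nat.card {σ : Equiv.Perm (Fin m) // desSet σ = ∅} = 1 := by
  refine Nat.card_eq_one_iff_unique.mpr ⟨⟨fun ⟨σ, hσ⟩ ⟨τ, hτ⟩ => ?_⟩, ⟨⟨1, desSet_one⟩⟩⟩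
  have hmono : ∀ π : Equiv.Perm (Fin m), desSet π = ∅ → ⇑π = Finset.univ.orderEmbOfFin (by simp) :=
    fun π hπ => Finset.orderEmbOfFin_unique _ (fun _ => Finset.mem_univ _)
      (strictMono_castLE_of_desSet_subset le_rfl (by simp [hπ]))
  exact Subtype.ext (DFunLike.coe_injective ((hmono σ hσ).trans (hmono τ hτ).symm))

end Descents

section SplitPerm

variable {N a : ℕ} (ha : a ≤ N)

/-- The permutation that lists `S` increasingly in its first `a` positions and then `Sᶜ` in the
relative order `τ`. -/
noncomputable def splitPerm (S : Finset (Fin N)) (hS : S.card = a)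
    (τ : Equiv.Perm (Fin (N - a))) : Equiv.Perm (Fin N) :=
  (finCongr (by omega : N = a + (N - a))).trans <| finSumFinEquiv.symm.trans <|
    (Equiv.sumCongr (S.orderIsoOfFin hS).toEquiv
      (τ.trans (Sᶜ.orderIsoOfFin (by simp [Finset.card_compl, hS])).toEquiv)).trans <|
    (Equiv.sumCongr (Equiv.refl _) (Equiv.subtypeEquivRight fun _ => Finset.mem_compl)).trans
      (Equiv.sumCompl (· ∈ S))

variable (S : Finset (Fin N)) (hS : S.card = a) (τ : Equiv.Perm (Fin (N - a)))

lemma splitPerm_apply_of_lt (i : Fin N) (hi : (i : ℕ) < a) :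
    splitPerm ha S hS τ i = S.orderEmbOfFin hS ⟨i, hi⟩ := by
  have : finCongr (by omega : N = a + (N - a)) i = Fin.castAdd (N - a) ⟨i, hi⟩ := rfl
  simp only [splitPerm, Equiv.trans_apply, this, finSumFinEquiv_symm_apply_castAdd]
  simp

lemma splitPerm_apply_of_le (i : Fin N) (hi : a ≤ (i : ℕ)) :
    splitPerm ha S hS τ i =
      Sᶜ.orderEmbOfFin (by simp [Finset.card_compl, hS]) (τ ⟨i - a, by omega⟩) := by
  have : finCongr (by omega : N = a + (N - a)) i = Fin.natAdd a ⟨i - a, by omega⟩ :=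
    Fin.ext (by simp only [finCongr_apply, Fin.val_cast, Fin.natAdd_mk]; omega)
  simp only [splitPerm, Equiv.trans_apply, this, finSumFinEquiv_symm_apply_natAdd]
  simp

lemma desSet_splitPerm_subset : desSet (splitPerm ha S hS τ) ⊆ Set.Ici a := by
  rintro i ⟨hiN, hi0, hlt⟩
  by_contra hia
  rw [Set.mem_Ici, not_le] at hia
  rw [splitPerm_apply_of_lt _ _ _ _ _ hia,
    splitPerm_apply_of_lt _ _ _ _ _ (show i - 1 < a by omega),
    OrderEmbedding.lt_iff_lt] at hlt
  exact absurd (show i < i - 1 from hlt) (by omega)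

lemma mem_desSet_splitPerm_iff {i : ℕ} (hai : a < i) (hiN : i < N) :
    i ∈ desSet (splitPerm ha S hS τ) ↔ i - a ∈ desSet τ := by
  rw [mem_desSet hiN, mem_desSet (by omega : i - a < N - a),
    splitPerm_apply_of_le _ _ _ _ _ hai.le,
    splitPerm_apply_of_le _ _ _ _ _ (show a ≤ i - 1 by omega),
    OrderEmbedding.lt_iff_lt]
  have : (⟨(⟨i - 1, by omega⟩ : Fin N) - a, by omega⟩ : Fin (N - a)) = ⟨i - a - 1, by omega⟩ :=
    Fin.ext (show i - 1 - a = i - a - 1 by omega)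
  rw [this]
  exact and_congr ⟨fun _ => by omega, fun _ => by omega⟩ Iff.rfl

lemma desSet_splitPerm_sdiff_singleton :
    desSet (splitPerm ha S hS τ) \ {a} = (· + a) '' desSet τ := by
  ext i
  constructor
  · rintro ⟨hi, hia⟩
    have hai : a < i := lt_of_le_of_ne (desSet_splitPerm_subset ha S hS τ hi) (Ne.symm hia)
    refine ⟨i - a, ?_, Nat.sub_add_cancel hai.le⟩
    rwa [← mem_desSet_splitPerm_iff ha S hS τ hai (pos_and_lt_of_mem_desSet hi).2]
  · rintro ⟨j, hj, rfl⟩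
    obtain ⟨hj0, hjN⟩ := pos_and_lt_of_mem_desSet hj
    refine ⟨?_, by simp only [Set.mem_singleton_iff]; omega⟩
    rwa [mem_desSet_splitPerm_iff ha S hS τ (show a < j + a by omega) (show j + a < N by omega),
      Nat.add_sub_cancel]

lemma range_splitPerm_castLE :
    Set.range (fun i : Fin a => splitPerm ha S hS τ (Fin.castLE ha i)) = S := by
  rw [← S.range_orderEmbOfFin hS]
  congr 1
  funext i
  exact splitPerm_apply_of_lt ha S hS τ _ i.isLt

end SplitPerm

section SplitPermInverse

variable {N a : ℕ} (ha : a ≤ N) (σ : Equiv.Perm (Fin N))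

noncomputable def headSet : Finset (Fin N) :=
  Finset.univ.map ((Fin.castLEEmb ha).trans σ.toEmbedding)

lemma card_headSet : (headSet ha σ).card = a := by simp [headSet]

lemma apply_mem_headSet_iff (j : Fin N) : σ j ∈ headSet ha σ ↔ (j : ℕ) < a := by
  simp only [headSet, Finset.mem_map, Finset.mem_univ, true_and, Function.Embedding.trans_apply,
    Fin.castLEEmb_apply, Equiv.coe_toEmbedding, σ.injective.eq_iff]
  exact ⟨fun ⟨i, hi⟩ => hi ▸ i.isLt, fun hj => ⟨⟨j, hj⟩, rfl⟩⟩

lemma card_compl_headSet : (headSet ha σ)ᶜ.card = N - a := by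
  simp [Finset.card_compl, card_headSet]

noncomputable def tailPerm : Equiv.Perm (Fin (N - a)) :=
  Equiv.ofBijective
    (fun j => ((headSet ha σ)ᶜ.orderIsoOfFin (card_compl_headSet ha σ)).symm
      ⟨σ ⟨a + j, by omega⟩, by simp [apply_mem_headSet_iff]⟩)
    (Finite.injective_iff_bijective.mp fun j k hjk => by
      simpa [Fin.ext_iff] using σ.injective (Subtype.ext_iff.mp (OrderIso.injective _ hjk)))

lemma splitPerm_headSet_tailPerm (h : desSet σ ⊆ Set.Ici a) :
    splitPerm ha (headSet ha σ) (card_headSet ha σ) (tailPerm ha σ) = σ := by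
  ext i : 1
  rcases lt_or_ge (i : ℕ) a with hi | hi
  · rw [splitPerm_apply_of_lt _ _ _ _ _ hi,
      ← Finset.orderEmbOfFin_unique (card_headSet ha σ)
        (fun j => (apply_mem_headSet_iff ha σ _).mpr j.isLt)
        (strictMono_castLE_of_desSet_subset ha h)]
    rfl
  · rw [splitPerm_apply_of_le _ _ _ _ _ hi, tailPerm, Equiv.ofBijective_apply,
      ← Finset.coe_orderIsoOfFin_apply, OrderIso.apply_symm_apply]
    exact congrArg σ (Fin.ext (show a + (i - a) = i by omega))

end SplitPermInverse

section SplitPermEquiv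

variable {N a : ℕ} (ha : a ≤ N)

lemma splitPerm_injective {S S' : Finset (Fin N)} {hS : S.card = a} {hS' : S'.card = a}
    {τ τ' : Equiv.Perm (Fin (N - a))} (h : splitPerm ha S hS τ = splitPerm ha S' hS' τ') :
    S = S' ∧ τ = τ' := by
  obtain rfl : S = S' := Finset.coe_injective <| by
    rw [← range_splitPerm_castLE ha S hS τ, h, range_splitPerm_castLE]
  refine ⟨rfl, Equiv.ext fun j => ?_⟩
  have hj := DFunLike.congr_fun h ⟨a + j, by omega⟩
  rw [splitPerm_apply_of_le _ _ _ _ _ (by simp), splitPerm_apply_of_le _ _ _ _ _ (by simp)] at hj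
  simpa using (Finset.orderEmbOfFin _ _).injective hj

noncomputable def splitPermEquiv :
    Equiv.Perm (Fin (N - a)) × {S : Finset (Fin N) // S.card = a} ≃
      {σ : Equiv.Perm (Fin N) // desSet σ ⊆ Set.Ici a} :=
  Equiv.ofBijective
    (fun p => ⟨splitPerm ha p.2 p.2.2 p.1, desSet_splitPerm_subset ha _ _ _⟩)
    ⟨fun ⟨_, _, _⟩ ⟨_, _, _⟩ h => by
      obtain ⟨rfl, rfl⟩ := splitPerm_injective ha (congrArg Subtype.val h)
      rfl,
    fun ⟨σ, hσ⟩ => ⟨(tailPerm ha σ, ⟨headSet ha σ, card_headSet ha σ⟩),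
      Subtype.ext (splitPerm_headSet_tailPerm ha σ hσ)⟩⟩

end SplitPermEquiv

lemma card_desSet_subset_Ici_sdiff_eq_image {N a : ℕ} (ha : a ≤ N) (T : Set ℕ) :
    Nat.card {σ : Equiv.Perm (Fin N) // desSet σ ⊆ Set.Ici a ∧ desSet σ \ {a} = (· + a) '' T} =
      N.choose a * Nat.card {τ : Equiv.Perm (Fin (N - a)) // desSet τ = T} := by
  have hT : ∀ p : Equiv.Perm (Fin (N - a)) × {S : Finset (Fin N) // S.card = a},
      desSet p.1 = T ↔ desSet (splitPermEquiv ha p).1 \ {a} = (· + a) '' T := fun p => by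
    rw [show (splitPermEquiv ha p : Equiv.Perm (Fin N)) = splitPerm ha p.2 p.2.2 p.1 from rfl,
      desSet_splitPerm_sdiff_singleton, (Set.image_injective.mpr (add_left_injective a)).eq_iff]
  calc _ = Nat.card {σ : {σ : Equiv.Perm (Fin N) // desSet σ ⊆ Set.Ici a} //
          desSet σ.1 \ {a} = (· + a) '' T} :=
        Nat.card_congr (Equiv.subtypeSubtypeEquivSubtypeInter _ _).symm
    _ = Nat.card {p : Equiv.Perm (Fin (N - a)) × {S : Finset (Fin N) // S.card = a} //
          desSet p.1 = T} := Nat.card_congr (Equiv.subtypeEquiv (splitPermEquiv ha) hT).symm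
    _ = _ := by
      rw [Nat.card_congr (Equiv.prodSubtypeFstEquivSubtypeProd (p := fun τ => desSet τ = T)),
        Nat.card_prod, mul_comm,
        Nat.card_eq_fintype_card (α := {S : Finset (Fin N) // S.card = a}),
        Fintype.card_finset_len, Fintype.card_fin]

lemma card_desSet_subset_Ici_sdiff_eq {N a : ℕ} {T : Set ℕ} (hT : T ⊆ Set.Ioi a) :
    Nat.card {σ : Equiv.Perm (Fin N) // desSet σ ⊆ Set.Ici a ∧ desSet σ \ {a} = T} =
      Nat.card {σ : Equiv.Perm (Fin N) // desSet σ = T} +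
        Nat.card {σ : Equiv.Perm (Fin N) // desSet σ = insert a T} := by
  classical
  have hdisj : Disjoint (fun σ : Equiv.Perm (Fin N) => desSet σ = T)
      (fun σ => desSet σ = insert a T) := Pi.disjoint_iff.mpr fun σ =>
    Prop.disjoint_iff.mpr fun ⟨h₁, h₂⟩ => lt_irrefl a (hT (h₁ ▸ h₂ ▸ Set.mem_insert a T))
  rw [Nat.card_congr (Equiv.subtypeEquivRight fun σ =>
      Set.subset_Ici_and_sdiff_singleton_eq_iff hT), Nat.card_eq_fintype_card,
    Fintype.card_subtype_or_disjoint _ _ hdisj, Nat.card_eq_fintype_card, Nat.card_eq_fintype_card]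

def multiplesIoo (r lo hi : ℕ) : Set ℕ := {i | lo < i ∧ i < hi ∧ r ∣ i}

section Multiples

variable {r a N : ℕ}

lemma add_le_of_dvd_of_lt {i : ℕ} (ha : r ∣ a) (hi : r ∣ i) (hai : a < i) : a + r ≤ i := by
  have := Nat.le_of_dvd (by omega) (Nat.dvd_sub hi ha)
  omega

lemma multiplesIoo_subset_Ioi : multiplesIoo r a N ⊆ Set.Ioi a := fun _ hi => hi.1

lemma image_add_multiplesIoo (ha : r ∣ a) (haN : a ≤ N) :
    (· + a) '' multiplesIoo r 0 (N - a) = multiplesIoo r a N := by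
  ext i
  constructor
  · rintro ⟨j, ⟨hj0, hjN, hj⟩, rfl⟩
    exact ⟨show a < j + a by omega, show j + a < N by omega, dvd_add hj ha⟩
  · rintro ⟨hai, hiN, hi⟩
    exact ⟨i - a, ⟨by omega, by omega, Nat.dvd_sub hi ha⟩, Nat.sub_add_cancel hai.le⟩

lemma insert_multiplesIoo_add (hr : 0 < r) (ha : r ∣ a) (haN : a + r < N) :
    insert (a + r) (multiplesIoo r (a + r) N) = multiplesIoo r a N := by
  ext i
  rw [Set.mem_insert_iff]
  constructor
  · rintro (rfl | ⟨hi, hiN, hri⟩)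
    · exact ⟨by omega, haN, dvd_add ha dvd_rfl⟩
    · exact ⟨by omega, hiN, hri⟩
  · rintro ⟨hai, hiN, hri⟩
    have := add_le_of_dvd_of_lt ha hri hai
    by_cases h : i = a + r
    · exact .inl h
    · exact .inr ⟨by omega, hiN, hri⟩

lemma multiplesIoo_eq_empty (ha : r ∣ a) (hN : N ≤ a + r) : multiplesIoo r a N = ∅ :=
  Set.eq_empty_of_forall_notMem fun _ ⟨hai, hiN, hri⟩ => by
    have := add_le_of_dvd_of_lt ha hri hai
    omega

end Multiples

lemma card_desSet_eq_insert_zero_eq_zero (N : ℕ) (T : Set ℕ) :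
    Nat.card {σ : Equiv.Perm (Fin N) // desSet σ = insert 0 T} = 0 :=
  have : IsEmpty {σ : Equiv.Perm (Fin N) // desSet σ = insert 0 T} :=
    ⟨fun ⟨_, h⟩ => (pos_and_lt_of_mem_desSet (h ▸ Set.mem_insert 0 T)).1.false⟩
  Nat.card_of_isEmpty

lemma choose_mul_genEuler_eq_card_add_card {r a N : ℕ} (ha : r ∣ a) (haN : a ≤ N) :
    N.choose a * genEuler r (N - a) =
      Nat.card {σ : Equiv.Perm (Fin N) // desSet σ = multiplesIoo r a N} +
        Nat.card {σ : Equiv.Perm (Fin N) // desSet σ = insert a (multiplesIoo r a N)} := by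
  change _ * Nat.card {τ : Equiv.Perm (Fin (N - a)) // desSet τ = multiplesIoo r 0 (N - a)} = _
  rw [← card_desSet_subset_Ici_sdiff_eq_image haN, image_add_multiplesIoo ha haN,
    card_desSet_subset_Ici_sdiff_eq multiplesIoo_subset_Ioi]

theorem sum_neg_one_pow_mul_choose_mul_genEuler {R : Type*} [Ring R] {r : ℕ} (hr : 2 ≤ r)
    (n : ℕ) :
    ∑ k ∈ Finset.range (n + 1),
      (-1 : R) ^ k * ((r * (n + 1) - 1).choose (r * k) : ℕ) * genEuler r (r * (n + 1 - k) - 1) =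
        (-1) ^ n := by
  simp_rw [mul_assoc, ← Nat.cast_mul]
  set N := r * (n + 1) - 1
  have hrk : ∀ k ≤ n, r * k ≤ r * n := fun k hk => Nat.mul_le_mul_left r hk
  have hrn : r * (n + 1) = r * n + r := mul_add_one r n
  let E : ℕ → R := fun j => Nat.card {σ : Equiv.Perm (Fin N) // desSet σ = multiplesIoo r (r * j) N}
  have hsub : ∀ k ≤ n, r * (n + 1 - k) - 1 = N - r * k := fun k hk => by
    rw [Nat.mul_sub, hrn]; omega
  rw [Finset.sum_congr rfl fun k hk => by rw [hsub k (Finset.mem_range_succ_iff.mp hk)]]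
  rw [sum_range_succ_neg_one_pow_mul_eq _ E]
  · simp only [E, multiplesIoo_eq_empty (N := N) (dvd_mul_right r n) (by omega),
      card_desSet_eq_empty_eq_one, Nat.cast_one, mul_one]
  · rw [choose_mul_genEuler_eq_card_add_card (dvd_mul_right r 0) (Nat.zero_le _), mul_zero,
      card_desSet_eq_insert_zero_eq_zero, add_zero]
    rfl
  · intro k hk
    have := hrk (k + 1) hk
    rw [mul_add_one r k] at this ⊢
    rw [choose_mul_genEuler_eq_card_add_card (dvd_add (dvd_mul_right r k) dvd_rfl) (by omega),
      insert_multiplesIoo_add (by omega) (dvd_mul_right r k) (by omega), Nat.cast_add]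
    simp only [E, mul_add_one]

section ExponentialGeneratingFunction

variable {K : Type*} [Field K] [CharZero K]

lemma coeff_mk_div_factorial_mul_mk_div_factorial (a b : ℕ → K) (n : ℕ) :
    coeff n (mk (fun k => a k / k !) * mk (fun k => b k / k !)) * n ! =
      ∑ k ∈ Finset.range (n + 1), n.choose k * a k * b (n - k) := by
  rw [coeff_mul, Finset.Nat.sum_antidiagonal_eq_sum_range_succ_mk, Finset.sum_mul]
  refine Finset.sum_congr rfl fun k hk => ?_
  rw [coeff_mk, coeff_mk, Nat.cast_choose K (Finset.mem_range_succ_iff.mp hk)]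
  field_simp

lemma derivative_mk_div_factorial (a : ℕ → K) :
    d⁄dX K (mk fun k => a k / k !) = mk fun k => a (k + 1) / k ! := by
  ext k
  rw [coeff_derivative, coeff_mk, coeff_mk, Nat.factorial_succ, Nat.cast_mul]
  field_simp
  push_cast
  ring

end ExponentialGeneratingFunction

theorem sum_neg_one_pow_mul_choose_mul_eq_of_log {K : Type*} [Field K] [CharZero K] {r : ℕ}
    (hr : 0 < r) (rseq : ℕ → K) (L g : K⟦X⟧)
    (hL : L = mk fun k => if r ∣ k ∧ k ≠ 0 then rseq (k / r) / (k ! : K) else 0)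
    (hg : g = mk fun k => if r ∣ k then (-1 : K) ^ (k / r) / (k ! : K) else 0)
    (hlog : g * d⁄dX K L = -d⁄dX K g) (n : ℕ) :
    ∑ k ∈ Finset.range (n + 1), (-1 : K) ^ k * ((r * (n + 1) - 1).choose (r * k) : ℕ) *
      rseq (n + 1 - k) = (-1) ^ n := by
  set d := r * (n + 1) - 1 with hd_def
  have hd : d + 1 = r * (n + 1) := by
    have : 0 < r * (n + 1) := by positivity
    omega
  set G : ℕ → K := fun k => if r ∣ k then (-1) ^ (k / r) else 0
  set A : ℕ → K := fun k => if r ∣ k ∧ k ≠ 0 then rseq (k / r) else 0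
  have hg' : g = mk fun k => G k / k ! := by simp only [hg, G, ite_div, zero_div]
  have hL' : L = mk fun k => A k / k ! := by simp only [hL, A, ite_div, zero_div]
  have hG : ∀ k, G (r * k) = (-1) ^ k := fun k => by
    simp [G, Nat.mul_div_cancel_left k hr]
  have hA : ∀ k ≤ n, A (d - r * k + 1) = rseq (n + 1 - k) := fun k hk => by
    have hrk : r * k ≤ r * n := Nat.mul_le_mul_left r hk
    have hrn := mul_add_one r n
    have : d - r * k + 1 = r * (n + 1 - k) := by rw [Nat.mul_sub, ← hd]; omega
    simp only [A, this]
    rw [if_pos ⟨dvd_mul_right r _, Nat.mul_ne_zero hr.ne' (by omega)⟩,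
      Nat.mul_div_cancel_left _ hr]
  calc _ = ∑ k ∈ Finset.range (n + 1), d.choose (r * k) * G (r * k) * A (d - r * k + 1) :=
        Finset.sum_congr rfl fun k hk => by
          rw [hG, hA k (Finset.mem_range_succ_iff.mp hk)]
          ring
    _ = ∑ j ∈ Finset.range (d + 1), d.choose j * G j * A (d - j + 1) := by
      rw [hd, Finset.sum_range_mul_eq_sum_range_of_not_dvd hr]
      intro j hj
      simp [G, hj]
    _ = coeff d (g * d⁄dX K L) * d ! := by
      rw [hg', hL', derivative_mk_div_factorial, coeff_mk_div_factorial_mul_mk_div_factorial]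
    _ = -G (d + 1) := by
      rw [hlog, hg', derivative_mk_div_factorial, map_neg, coeff_mk, neg_mul,
        div_mul_cancel₀ _ (Nat.cast_ne_zero.mpr d.factorial_ne_zero)]
    _ = (-1) ^ n := by
      rw [hd, hG, pow_succ]
      ring

/-- Fix `r ≥ 2`. If `∑_{n≥1} r_n z^{rn}/(rn)! = -log (∑_{n≥0} (-1)^n z^{rn}/(rn)!)` as
formal power series over `ℚ` (the logarithm characterized by: the left side `L` has
constant term `0` and `g * L' = -g'`), then `r_n = E_{rn-1}`, the number of
permutations of `[rn-1]` with descent set `{r, 2r, ..., rn-r}`. -/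
theorem stmt_5 (r : ℕ) (hr : 2 ≤ r) (rseq : ℕ → ℚ)
    (L g : PowerSeries ℚ)
    (hL : L = PowerSeries.mk fun k =>
      if r ∣ k ∧ k ≠ 0 then rseq (k / r) / (Nat.factorial k : ℚ) else 0)
    (hg : g = PowerSeries.mk fun k =>
      if r ∣ k then (-1 : ℚ) ^ (k / r) / (Nat.factorial k : ℚ) else 0)
    (hlog : g * L.derivativeFun = -g.derivativeFun) :
    ∀ n : ℕ, 1 ≤ n → rseq n = genEuler r (r * n - 1) := by
  intro n hn
  obtain ⟨n, rfl⟩ := Nat.exists_eq_add_of_le' hn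
  refine eq_of_sum_range_succ_mul_eq
    (fun n k => (-1 : ℚ) ^ k * ((r * (n + 1) - 1).choose (r * k) : ℕ)) (fun n => (-1) ^ n)
    rseq (fun n => genEuler r (r * n - 1)) (fun n => by simp)
    (sum_neg_one_pow_mul_choose_mul_eq_of_log (by omega) rseq L g hL hg hlog)
    (sum_neg_one_pow_mul_choose_mul_genEuler hr) n
end

section
/- Let ω(n) be the number of pairs (π, ξ) of permutations of [n] with no common rise, i.e., there is no index i with π(i) < π(i+1) and ξ(i) < ξ(i+1) (viewing permutations as words). Then ∑_{n≥0} ω(n) x^n/(n!)^2 = (∑_{n≥0} (-1)^n x^n/(n!)^2)^{-1} as formal power series. -/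
open PowerSeries

/-- A pair of permutations of `[n]`, viewed as words, has a common rise at (0-indexed)
position `i` if both words increase from position `i` to `i+1`. -/
def HasNoCommonRise {n : ℕ} (π ξ : Equiv.Perm (Fin n)) : Prop :=
  ¬ ∃ i : ℕ, ∃ h : i + 1 < n,
    π ⟨i, Nat.lt_of_succ_lt h⟩ < π ⟨i + 1, h⟩ ∧
    ξ ⟨i, Nat.lt_of_succ_lt h⟩ < ξ ⟨i + 1, h⟩

/-- `ω n` is the number of pairs of permutations of `[n]` with no common rise. -/
noncomputable def omegaNCR (n : ℕ) : ℕ :=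
  Nat.card {p : Equiv.Perm (Fin n) × Equiv.Perm (Fin n) // HasNoCommonRise p.1 p.2}

open Equiv Finset

open scoped Classical

namespace StmtSix

def CR {n : ℕ} (p : Perm (Fin n) × Perm (Fin n)) (i : ℕ) : Prop :=
  ∃ h : i + 1 < n,
    p.1 ⟨i, Nat.lt_of_succ_lt h⟩ < p.1 ⟨i + 1, h⟩ ∧
    p.2 ⟨i, Nat.lt_of_succ_lt h⟩ < p.2 ⟨i + 1, h⟩

def Valid {n : ℕ} (k : ℕ) (p : Perm (Fin n) × Perm (Fin n)) : Prop :=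
  (∀ i, n - k ≤ i → i + 1 < n → CR p i) ∧ (∀ i, i + 1 < n - k → ¬ CR p i)

section psi
variable {n m k : ℕ} (hmk : m + k = n)

def psi (S : Finset (Fin n)) (hS : S.card = k) (hc : Sᶜ.card = m) (σ : Perm (Fin m)) :
    Perm (Fin n) :=
  ((finCongr hmk.symm).trans <| finSumFinEquiv.symm.trans <|
    (σ.sumCongr (Equiv.refl (Fin k))).trans <|
    (Equiv.sumCongr ((Sᶜ.orderIsoOfFin hc).toEquiv.trans
        (Equiv.subtypeEquivRight (fun _ => Finset.mem_compl)))
      (S.orderIsoOfFin hS).toEquiv).trans <|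
    (Equiv.sumComm _ _).trans (Equiv.sumCompl (· ∈ S)))

variable (S : Finset (Fin n)) (hS : S.card = k) (hc : Sᶜ.card = m) (σ : Perm (Fin m))

lemma psi_apply_lt {i : ℕ} (hi : i < m) (hin : i < n) :
    psi hmk S hS hc σ ⟨i, hin⟩ = Sᶜ.orderEmbOfFin hc (σ ⟨i, hi⟩) := by
  have h1 : (finCongr hmk.symm) ⟨i, hin⟩ = Fin.castAdd k ⟨i, hi⟩ := by ext; simp
  simp only [psi, Equiv.trans_apply, h1, finSumFinEquiv_symm_apply_castAdd,
    Equiv.sumCongr_apply, Sum.map_inl, Equiv.refl_apply, Equiv.sumComm_apply,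
    Sum.swap_inl, Equiv.sumCompl_apply_inr]
  rfl

lemma psi_apply_ge {j : ℕ} (hj : j < k) (hin : m + j < n) :
    psi hmk S hS hc σ ⟨m + j, hin⟩ = S.orderEmbOfFin hS ⟨j, hj⟩ := by
  have h1 : (finCongr hmk.symm) ⟨m + j, hin⟩ = Fin.natAdd m ⟨j, hj⟩ := by ext; simp
  simp only [psi, Equiv.trans_apply, h1, finSumFinEquiv_symm_apply_natAdd,
    Equiv.sumCongr_apply, Sum.map_inr, Equiv.refl_apply, Equiv.sumComm_apply,
    Sum.swap_inr, Equiv.sumCompl_apply_inl]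
  rfl

lemma psi_rise_iff {i : ℕ} (hi : i + 1 < m) (hin : i + 1 < n) :
    psi hmk S hS hc σ ⟨i, Nat.lt_of_succ_lt hin⟩ < psi hmk S hS hc σ ⟨i + 1, hin⟩ ↔
      σ ⟨i, Nat.lt_of_succ_lt hi⟩ < σ ⟨i + 1, hi⟩ := by
  rw [psi_apply_lt hmk S hS hc σ (Nat.lt_of_succ_lt hi) (Nat.lt_of_succ_lt hin),
    psi_apply_lt hmk S hS hc σ hi hin]
  exact (Sᶜ.orderEmbOfFin hc).strictMono.lt_iff_lt

lemma psi_apply_ge' {i : ℕ} (hin : i < n) (him : m ≤ i) (hj : i - m < k) :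
    psi hmk S hS hc σ ⟨i, hin⟩ = S.orderEmbOfFin hS ⟨i - m, hj⟩ := by
  have h2 : m + (i - m) < n := by omega
  have h : (⟨i, hin⟩ : Fin n) = ⟨m + (i - m), h2⟩ := by ext; simp; omega
  rw [h, psi_apply_ge hmk S hS hc σ hj h2]

lemma psi_rise_tail {i : ℕ} (hi : m ≤ i) (hin : i + 1 < n) :
    psi hmk S hS hc σ ⟨i, Nat.lt_of_succ_lt hin⟩ < psi hmk S hS hc σ ⟨i + 1, hin⟩ := by
  rw [psi_apply_ge' hmk S hS hc σ (Nat.lt_of_succ_lt hin) hi (by omega),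
    psi_apply_ge' hmk S hS hc σ hin (by omega) (by omega)]
  exact (S.orderEmbOfFin hS).strictMono (by simp [Fin.mk_lt_mk]; omega)

lemma psi_image : S = Finset.image (fun j : Fin k => psi hmk S hS hc σ ⟨m + j, by omega⟩)
    Finset.univ := by
  ext x
  simp only [Finset.mem_image, Finset.mem_univ, true_and]
  constructor
  · intro hx
    refine ⟨(S.orderIsoOfFin hS).symm ⟨x, hx⟩, ?_⟩
    rcases h : (S.orderIsoOfFin hS).symm ⟨x, hx⟩ with ⟨j, hj⟩
    rw [psi_apply_ge hmk S hS hc σ hj (by omega)]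
    have := (S.orderIsoOfFin hS).apply_symm_apply ⟨x, hx⟩
    rw [h] at this
    rw [← Finset.coe_orderIsoOfFin_apply, this]
  · rintro ⟨⟨j, hj⟩, rfl⟩
    rw [psi_apply_ge hmk S hS hc σ hj (by omega)]
    exact Finset.orderEmbOfFin_mem S hS _

lemma psi_inj {T : Finset (Fin n)} {hT : T.card = k} {hc' : Tᶜ.card = m} {τ : Perm (Fin m)}
    (h : psi hmk S hS hc σ = psi hmk T hT hc' τ) : S = T ∧ σ = τ := by
  have hST : S = T := by
    rw [psi_image hmk S hS hc σ, psi_image hmk T hT hc' τ, h]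
  subst hST
  refine ⟨rfl, ?_⟩
  apply Equiv.ext
  rintro ⟨i, hi⟩
  have hin : i < n := by omega
  have e1 := psi_apply_lt hmk S hS hc σ hi hin
  have e2 := psi_apply_lt hmk S hT hc' τ hi hin
  have e3 : psi hmk S hS hc σ ⟨i, hin⟩ = psi hmk S hT hc' τ ⟨i, hin⟩ := by rw [h]
  rw [e1, e2] at e3
  exact (Sᶜ.orderEmbOfFin hc).injective e3

lemma psi_surj {π : Perm (Fin n)}
    (hπ : ∀ i, m ≤ i → (h : i + 1 < n) → π ⟨i, Nat.lt_of_succ_lt h⟩ < π ⟨i + 1, h⟩) :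
    ∃ (S : Finset (Fin n)) (hS : S.card = k) (hc : Sᶜ.card = m) (σ : Perm (Fin m)),
      psi hmk S hS hc σ = π := by
  classical
  set f : Fin k → Fin n := fun j => π ⟨m + j, by omega⟩ with hf
  have hfinj : Function.Injective f := by
    intro a b hab
    have := congrArg Fin.val (π.injective hab)
    simpa [Fin.ext_iff] using this
  set S : Finset (Fin n) := Finset.image f Finset.univ with hSdef
  have hS : S.card = k := by
    rw [hSdef, Finset.card_image_of_injective _ hfinj, Finset.card_univ, Fintype.card_fin]
  have hc : Sᶜ.card = m := by
    rw [Finset.card_compl, hS, Fintype.card_fin]; omega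
  have hnot : ∀ i : ℕ, i < m → ∀ (hin : i < n), π ⟨i, hin⟩ ∈ Sᶜ := by
    intro i hi hin
    rw [Finset.mem_compl]
    intro hmem
    rw [hSdef, Finset.mem_image] at hmem
    obtain ⟨j, -, hj⟩ := hmem
    have : π ⟨m + (j : ℕ), by omega⟩ = π ⟨i, hin⟩ := hj
    have := congrArg Fin.val (π.injective this)
    simp only at this
    omega
  set g : Fin m → Fin m :=
    fun i => (Sᶜ.orderIsoOfFin hc).symm ⟨π ⟨i, by omega⟩, hnot i i.2 (by omega)⟩ with hg
  have hginj : Function.Injective g := by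
    intro a b hab
    have h1 := (Sᶜ.orderIsoOfFin hc).symm.injective hab
    have h2 : (π ⟨(a : ℕ), by omega⟩ : Fin n) = π ⟨(b : ℕ), by omega⟩ :=
      congrArg Subtype.val h1
    have := congrArg Fin.val (π.injective h2)
    simpa [Fin.ext_iff] using this
  have hgbij := Finite.injective_iff_bijective.mp hginj
  refine ⟨S, hS, hc, Equiv.ofBijective g hgbij, ?_⟩
  apply Equiv.ext
  rintro ⟨i, hi⟩
  by_cases him : i < m
  · rw [psi_apply_lt hmk S hS hc _ him hi]
    show Sᶜ.orderEmbOfFin hc (g ⟨i, him⟩) = _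
    rw [← Finset.coe_orderIsoOfFin_apply, hg, OrderIso.apply_symm_apply]
  · push_neg at him
    have hj : i - m < k := by omega
    rw [psi_apply_ge' hmk S hS hc _ hi him hj]
    have hmem : ∀ x : Fin k, f x ∈ S := by
      intro x; rw [hSdef]; exact Finset.mem_image_of_mem f (Finset.mem_univ x)
    have hstep : ∀ j' : ℕ, (h : j' + 1 < k) → f ⟨j', Nat.lt_of_succ_lt h⟩ < f ⟨j' + 1, h⟩ := by
      intro j' h
      exact hπ (m + j') (by omega) (by omega)
    have hmono : StrictMono f := by
      rintro ⟨a, ha⟩ ⟨b, hb⟩ hab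
      have hab' : a < b := hab
      clear hab
      induction b with
      | zero => omega
      | succ b ih =>
        rcases Nat.lt_or_ge a b with h1 | h1
        · exact lt_trans (ih (by omega) h1) (hstep b hb)
        · have hab2 : a = b := by omega
          subst hab2
          exact hstep a hb
    have huniq := Finset.orderEmbOfFin_unique hS hmem hmono
    have : f ⟨i - m, hj⟩ = π ⟨i, hi⟩ := by
      show π ⟨m + (i - m), by omega⟩ = π ⟨i, hi⟩
      have h4 : (⟨m + (i - m), by omega⟩ : Fin n) = ⟨i, hi⟩ := by ext; simp; omega
      rw [h4]
    rw [← this, huniq]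


end psi

section count

variable {n k : ℕ}

lemma card_valid (hk : k ≤ n) :
    Nat.card {p : Perm (Fin n) × Perm (Fin n) // Valid k p} =
      n.choose k ^ 2 * omegaNCR (n - k) := by
  classical
  have hmk : (n - k) + k = n := by omega
  set m := n - k with hm
  -- the forward map
  have hcS : ∀ (S : Finset (Fin n)), S.card = k → Sᶜ.card = m := by
    intro S hS
    rw [Finset.card_compl, hS, Fintype.card_fin]
  let F : ({S : Finset (Fin n) // S.card = k} × {S : Finset (Fin n) // S.card = k} ×
      {q : Perm (Fin m) × Perm (Fin m) // HasNoCommonRise q.1 q.2}) →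
      {p : Perm (Fin n) × Perm (Fin n) // Valid k p} := fun x =>
    ⟨(psi hmk x.1.1 x.1.2 (hcS _ x.1.2) x.2.2.1.1,
      psi hmk x.2.1.1 x.2.1.2 (hcS _ x.2.1.2) x.2.2.1.2), by
      constructor
      · intro i hi h
        exact ⟨h, psi_rise_tail hmk _ _ _ _ hi h, psi_rise_tail hmk _ _ _ _ hi h⟩
      · rintro i hi ⟨h, r1, r2⟩
        refine x.2.2.2 ⟨i, hi, ?_, ?_⟩
        · exact (psi_rise_iff hmk _ _ _ _ hi h).mp r1
        · exact (psi_rise_iff hmk _ _ _ _ hi h).mp r2⟩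
  have hbij : Function.Bijective F := by
    constructor
    · rintro ⟨⟨S, hS⟩, ⟨T, hT⟩, ⟨⟨σ, τ⟩, hq⟩⟩ ⟨⟨S', hS'⟩, ⟨T', hT'⟩, ⟨⟨σ', τ'⟩, hq'⟩⟩ h
      have h1 := congrArg (fun z => z.1.1) h
      have h2 := congrArg (fun z => z.1.2) h
      simp only [F] at h1 h2
      obtain ⟨e1, e2⟩ := psi_inj hmk _ _ _ _ h1
      obtain ⟨e3, e4⟩ := psi_inj hmk _ _ _ _ h2
      subst e1; subst e3
      simp only [Prod.mk.injEq, Subtype.mk.injEq]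
      exact ⟨trivial, trivial, e2, e4⟩
    · rintro ⟨⟨π, ξ⟩, hv⟩
      obtain ⟨S, hS, hc1, σ, hσ⟩ := psi_surj hmk (π := π) (fun i hi h =>
        ((hv.1 i hi h).2.1))
      obtain ⟨T, hT, hc2, τ, hτ⟩ := psi_surj hmk (π := ξ) (fun i hi h =>
        ((hv.1 i hi h).2.2))
      have hq : HasNoCommonRise σ τ := by
        rintro ⟨i, hi, r1, r2⟩
        have h : i + 1 < n := by omega
        refine hv.2 i hi ⟨h, ?_, ?_⟩
        · rw [← hσ]; exact (psi_rise_iff hmk _ _ _ _ hi h).mpr r1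
        · rw [← hτ]; exact (psi_rise_iff hmk _ _ _ _ hi h).mpr r2
      refine ⟨⟨⟨S, hS⟩, ⟨T, hT⟩, ⟨(σ, τ), hq⟩⟩, ?_⟩
      apply Subtype.ext
      simp only [F]
      exact Prod.ext hσ hτ
  rw [← Nat.card_eq_of_bijective F hbij, Nat.card_prod, Nat.card_prod]
  have h1 : Nat.card {S : Finset (Fin n) // S.card = k} = n.choose k := by
    rw [Nat.card_eq_fintype_card]
    simpa using Fintype.card_finset_len (α := Fin n) k
  have h2 : Nat.card {q : Perm (Fin m) × Perm (Fin m) // HasNoCommonRise q.1 q.2} =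
      omegaNCR m := rfl
  rw [h1, h2]
  ring

end count

section cancel

variable {n : ℕ}

lemma valid_gap {k k' : ℕ} (p : Perm (Fin n) × Perm (Fin n)) (hk' : k' ≤ n)
    (h2 : k + 2 ≤ k') (hv : Valid k p) (hv' : Valid k' p) : False :=
  hv.2 (n - k - 2) (by omega) (hv'.1 (n - k - 2) (by omega) (by omega))

lemma valid_partner {k : ℕ} (p : Perm (Fin n) × Perm (Fin n)) (hn : 1 ≤ n) (hk : k ≤ n)
    (hv : Valid k p) :
    (k + 1 ≤ n ∧ Valid (k + 1) p) ∨ (1 ≤ k ∧ Valid (k - 1) p) := by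
  rcases Nat.eq_or_lt_of_le hk with rfl | hkn
  · right
    refine ⟨hn, fun i hi h => hv.1 i (by omega) h, fun i hi => absurd hi (by omega)⟩
  · rcases Nat.eq_zero_or_pos k with rfl | hk1
    · left
      refine ⟨by omega, fun i hi h => absurd h (by omega), fun i hi => hv.2 i (by omega)⟩
    · by_cases hcr : CR p (n - k - 1)
      · left
        refine ⟨by omega, ?_, fun i hi => hv.2 i (by omega)⟩
        intro i hi h
        rcases Nat.lt_or_ge i (n - k) with hlt | hge
        · have : i = n - k - 1 := by omega
          rw [this]; exact hcr
        · exact hv.1 i hge h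
      · right
        refine ⟨hk1, fun i hi h => hv.1 i (by omega) h, ?_⟩
        intro i hi
        rcases Nat.lt_or_ge (i + 1) (n - k) with hlt | hge
        · exact hv.2 i hlt
        · have : i = n - k - 1 := by omega
          rw [this]; exact hcr

lemma sum_valid_zero (hn : 1 ≤ n) (p : Perm (Fin n) × Perm (Fin n)) :
    ∑ k ∈ Finset.range (n + 1), ((-1 : ℚ) ^ k * if Valid k p then 1 else 0) = 0 := by
  classical
  have h1 : ∀ k, ((-1 : ℚ) ^ k * if Valid k p then 1 else 0) =
      if Valid k p then (-1 : ℚ) ^ k else 0 := by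
    intro k; split <;> simp
  simp only [h1]
  rw [← Finset.sum_filter]
  set A := (Finset.range (n + 1)).filter (fun k => Valid k p) with hA
  rcases Finset.eq_empty_or_nonempty A with he | hne
  · rw [he, Finset.sum_empty]
  · set K := A.min' hne with hK
    have hKA : K ∈ A := A.min'_mem hne
    have hKn : K ≤ n := by
      have := (Finset.mem_filter.mp hKA).1
      simpa [Nat.lt_succ_iff] using Finset.mem_range.mp this
    have hKv : Valid K p := (Finset.mem_filter.mp hKA).2
    have hK1 : K + 1 ≤ n ∧ Valid (K + 1) p := by
      rcases valid_partner p hn hKn hKv with h | ⟨hg1, hg2⟩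
      · exact h
      · exfalso
        have hmem : K - 1 ∈ A := by
          rw [hA, Finset.mem_filter, Finset.mem_range]
          exact ⟨by omega, hg2⟩
        have := A.min'_le _ hmem
        omega
    have hK1A : K + 1 ∈ A := by
      rw [hA, Finset.mem_filter, Finset.mem_range]
      exact ⟨by omega, hK1.2⟩
    have hAe : A = {K, K + 1} := by
      apply Finset.Subset.antisymm
      · intro k hk
        have hkK := A.min'_le k hk
        have hkn : k ≤ n := by
          have := (Finset.mem_filter.mp hk).1
          simpa [Nat.lt_succ_iff] using Finset.mem_range.mp this
        have hkv : Valid k p := (Finset.mem_filter.mp hk).2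
        simp only [Finset.mem_insert, Finset.mem_singleton]
        by_contra hcon
        push_neg at hcon
        have : K + 2 ≤ k := by omega
        exact valid_gap p hkn this hKv hkv
      · intro k hk
        simp only [Finset.mem_insert, Finset.mem_singleton] at hk
        rcases hk with rfl | rfl
        · exact hKA
        · exact hK1A
    rw [hAe, Finset.sum_insert (by simp), Finset.sum_singleton, pow_succ]
    ring

lemma recurrence (hn : 1 ≤ n) :
    ∑ k ∈ Finset.range (n + 1), (-1 : ℚ) ^ k * (n.choose k : ℚ) ^ 2 * omegaNCR (n - k) = 0 := by
  classical
  have hcard : ∀ k, k ≤ n → ((n.choose k : ℚ) ^ 2 * omegaNCR (n - k)) =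
      ∑ p : Perm (Fin n) × Perm (Fin n), (if Valid k p then (1 : ℚ) else 0) := by
    intro k hk
    have := card_valid (n := n) (k := k) hk
    have h2 : Nat.card {p : Perm (Fin n) × Perm (Fin n) // Valid k p} =
        ∑ p : Perm (Fin n) × Perm (Fin n), (if Valid k p then (1 : ℕ) else 0) := by
      rw [Nat.card_eq_fintype_card, Fintype.card_subtype, Finset.card_filter]
    rw [h2] at this
    have := congrArg (fun x : ℕ => (x : ℚ)) this.symm
    push_cast at this
    simpa using this
  calc ∑ k ∈ Finset.range (n + 1), (-1 : ℚ) ^ k * (n.choose k : ℚ) ^ 2 * omegaNCR (n - k)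
      = ∑ k ∈ Finset.range (n + 1), ∑ p : Perm (Fin n) × Perm (Fin n),
          ((-1 : ℚ) ^ k * if Valid k p then 1 else 0) := by
        apply Finset.sum_congr rfl
        intro k hk
        rw [mul_assoc, hcard k (by simpa [Nat.lt_succ_iff] using Finset.mem_range.mp hk),
          Finset.mul_sum]
    _ = ∑ p : Perm (Fin n) × Perm (Fin n), ∑ k ∈ Finset.range (n + 1),
          ((-1 : ℚ) ^ k * if Valid k p then 1 else 0) := Finset.sum_comm
    _ = 0 := by
        rw [Finset.sum_congr rfl (fun p _ => sum_valid_zero hn p), Finset.sum_const,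
          smul_zero]

end cancel


lemma omega_zero : omegaNCR 0 = 1 := by
  have hall : ∀ p : Perm (Fin 0) × Perm (Fin 0), HasNoCommonRise p.1 p.2 := by
    rintro p ⟨i, hi, -⟩
    omega
  rw [omegaNCR, Nat.card_eq_one_iff_unique]
  constructor
  · constructor
    intro a b
    apply Subtype.ext
    apply Prod.ext <;> exact Subsingleton.elim _ _
  · exact ⟨⟨(1, 1), hall _⟩⟩

lemma term_eq {n k : ℕ} (hkn : k ≤ n) :
    (omegaNCR k : ℚ) / (k.factorial : ℚ) ^ 2 * ((-1 : ℚ) ^ (n - k) / ((n - k).factorial : ℚ) ^ 2)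
      = (1 / ((n.factorial : ℚ)) ^ 2) *
        ((-1 : ℚ) ^ (n - k) * (n.choose (n - k) : ℚ) ^ 2 * (omegaNCR (n - (n - k)) : ℚ)) := by
  have key : (n.choose k : ℚ) * (k.factorial : ℚ) * ((n - k).factorial : ℚ)
      = (n.factorial : ℚ) := by
    exact_mod_cast Nat.choose_mul_factorial_mul_factorial hkn
  rw [Nat.sub_sub_self hkn, Nat.choose_symm hkn]
  have h1 : (k.factorial : ℚ) ≠ 0 := Nat.cast_ne_zero.mpr (Nat.factorial_ne_zero k)
  have h2 : ((n - k).factorial : ℚ) ≠ 0 := Nat.cast_ne_zero.mpr (Nat.factorial_ne_zero _)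
  have h3 : (n.factorial : ℚ) ≠ 0 := Nat.cast_ne_zero.mpr (Nat.factorial_ne_zero n)
  field_simp
  rw [← key]
  ring

end StmtSix

/-- `∑_{n≥0} ω(n) x^n/(n!)^2 = (∑_{n≥0} (-1)^n x^n/(n!)^2)⁻¹` as formal power series
over `ℚ`, i.e. the product of the two series is `1`. -/
theorem stmt_6 :
    (PowerSeries.mk fun n => (omegaNCR n : ℚ) / ((Nat.factorial n : ℚ)) ^ 2) *
      (PowerSeries.mk fun n => (-1 : ℚ) ^ n / ((Nat.factorial n : ℚ)) ^ 2) = 1 := by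
  apply PowerSeries.ext
  intro n
  rw [PowerSeries.coeff_mul]
  simp only [PowerSeries.coeff_mk]
  rcases Nat.eq_zero_or_pos n with rfl | hn
  · simp [StmtSix.omega_zero]
  · rw [Finset.Nat.sum_antidiagonal_eq_sum_range_succ_mk]
    have hrec := StmtSix.recurrence (n := n) hn
    have hrefl : ∑ k ∈ Finset.range (n + 1),
        (-1 : ℚ) ^ (n - k) * (n.choose (n - k) : ℚ) ^ 2 * (omegaNCR (n - (n - k)) : ℚ) = 0 := by
      rw [← hrec]
      exact Finset.sum_range_reflect
        (fun k => (-1 : ℚ) ^ k * (n.choose k : ℚ) ^ 2 * (omegaNCR (n - k) : ℚ)) (n + 1)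
    have hterm : ∀ k ∈ Finset.range (n + 1),
        (omegaNCR k : ℚ) / (k.factorial : ℚ) ^ 2 *
          ((-1 : ℚ) ^ (n - k) / ((n - k).factorial : ℚ) ^ 2)
        = (1 / ((n.factorial : ℚ)) ^ 2) *
          ((-1 : ℚ) ^ (n - k) * (n.choose (n - k) : ℚ) ^ 2 * (omegaNCR (n - (n - k)) : ℚ)) := by
      intro k hk
      exact StmtSix.term_eq (by simpa [Nat.lt_succ_iff] using Finset.mem_range.mp hk)
    rw [Finset.sum_congr rfl hterm, ← Finset.mul_sum, hrefl, mul_zero]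
    rw [PowerSeries.coeff_one]
    simp [Nat.pos_iff_ne_zero.mp hn]
end

section
/- Define h_n by ∑_{n≥0} h_n x^n/(n!)^r = (∑_{n≥0} (-1)^n x^n/(n!)^r)^{-1}. Then each h_n is a nonnegative integer. -/
/-!
`h_n` is the number of `r`-tuples of permutations of `{0, …, n-1}` without a common ascent,
i.e. such that every position `i < n - 1` is a descent of at least one coordinate. Comparing
coefficients, the defining relation says `∑_k (-1)^(n-k) C(n,k)^r h_k = [n = 0]`.

Call `k ≤ n` a cut of a tuple if all positions `≥ k` are common ascents and none of the
positions `< k - 1` is. Standardizing the first `k` values of each coordinate shows that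
`C(n,k)^r h_k` tuples have a cut at `k`. A tuple has a cut only if its set of common ascents is
an up-set `[j, ∞)`, and then its cuts are exactly `j` and `j + 1`; for `n ≥ 1` both lie in
`[0, n]`, so every tuple contributes `0` to the alternating sum.
-/

open Finset Equiv PowerSeries

/-- Positions `i` with `i + 1` out of range count as ascents. -/
def IsAscentAt {α : Type*} [Preorder α] {n : ℕ} (f : Fin n → α) (i : ℕ) : Prop :=
  ∀ h : i + 1 < n, f ⟨i, Nat.lt_of_succ_lt h⟩ < f ⟨i + 1, h⟩

def commonAscents {α ι : Type*} [Preorder α] {n : ℕ} (τ : ι → Fin n → α) : Set ℕ :=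
  {i | ∀ j, IsAscentAt (τ j) i}

def NoCommonAscentBelow {α ι : Type*} [Preorder α] {n : ℕ} (τ : ι → Fin n → α) (k : ℕ) :
    Prop :=
  ∀ i, i + 1 < k → i ∉ commonAscents τ

noncomputable def countNoCommonAscent (r n : ℕ) : ℕ :=
  Nat.card {τ : Fin r → Perm (Fin n) // NoCommonAscentBelow (fun j => ⇑(τ j)) n}

def IsCut (C : Set ℕ) (k : ℕ) : Prop :=
  (∀ i, k ≤ i → i ∈ C) ∧ ∀ i, i + 1 < k → i ∉ C

section Ascents

variable {α : Type*} [Preorder α] {n k m i : ℕ}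

lemma isAscentAt_of_le (f : Fin n → α) (hi : n ≤ i + 1) : IsAscentAt f i :=
  fun h => absurd h (by omega)

lemma mem_commonAscents_of_le {ι : Type*} (τ : ι → Fin n → α) (hi : n ≤ i + 1) :
    i ∈ commonAscents τ :=
  fun j => isAscentAt_of_le (τ j) hi

lemma isAscentAt_comp_castAdd (f : Fin (k + m) → α) (hi : i + 1 < k) :
    IsAscentAt (f ∘ Fin.castAdd m) i ↔ IsAscentAt f i :=
  ⟨fun hf _ => hf hi, fun hf _ => hf (by omega)⟩

lemma forall_isAscentAt_iff_strictMono_comp_natAdd (f : Fin (k + m) → α) :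
    (∀ i, k ≤ i → IsAscentAt f i) ↔ StrictMono (f ∘ Fin.natAdd k) := by
  rcases m with _ | m
  · exact ⟨fun _ a => a.elim0, fun _ i _ h => absurd h (by omega)⟩
  rw [Fin.strictMono_iff_lt_succ]
  constructor
  · intro hf j
    exact hf (k + j) (by omega) (by omega)
  · intro hf i hki h
    obtain ⟨j, rfl⟩ := Nat.exists_eq_add_of_le hki
    exact hf ⟨j, by omega⟩

lemma isCut_commonAscents_iff {ι : Type*} (τ : ι → Fin (k + m) → α) :
    IsCut (commonAscents τ) k ↔ (∀ j, StrictMono (τ j ∘ Fin.natAdd k)) ∧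
      NoCommonAscentBelow (fun j => τ j ∘ Fin.castAdd m) k := by
  simp only [IsCut, NoCommonAscentBelow, ← forall_isAscentAt_iff_strictMono_comp_natAdd]
  refine and_congr ⟨fun h j i hi => h i hi j, fun h i hi j => h j i hi⟩
    (forall₂_congr fun i hi => not_congr (forall_congr' fun j => ?_))
  exact (isAscentAt_comp_castAdd _ hi).symm

end Ascents

lemma StrictMono.isAscentAt_comp_iff {α β : Type*} [LinearOrder α] [Preorder β] {g : α → β}
    (hg : StrictMono g) {n : ℕ} (f : Fin n → α) (i : ℕ) :
    IsAscentAt (g ∘ f) i ↔ IsAscentAt f i :=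
  forall_congr' fun _ => hg.lt_iff_lt

section Cuts

lemma isCut_Ici_iff {j k : ℕ} : IsCut (Set.Ici j) k ↔ k = j ∨ k = j + 1 := by
  simp only [IsCut, Set.mem_Ici]
  constructor
  · rintro ⟨hge, hlt⟩
    have := hge k le_rfl
    have := hlt j
    omega
  · rintro (rfl | rfl) <;> constructor <;> intros <;> omega

lemma IsCut.exists_eq_Ici {C : Set ℕ} {k : ℕ} (h : IsCut C k) : ∃ j, C = Set.Ici j := by
  by_cases hk : k ≠ 0 ∧ k - 1 ∈ C
  · refine ⟨k - 1, Set.ext fun i => ⟨fun hi => ?_, fun hi => ?_⟩⟩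
    · by_contra hlt
      exact h.2 i (by simp only [Set.mem_Ici, not_le] at hlt; omega) hi
    · rcases (Set.mem_Ici.1 hi).eq_or_lt with rfl | hlt
      · exact hk.2
      · exact h.1 i (by omega)
  · refine ⟨k, Set.ext fun i => ⟨fun hi => ?_, h.1 i⟩⟩
    by_contra hlt
    simp only [Set.mem_Ici, not_le] at hlt
    rcases Nat.lt_or_ge (i + 1) k with hik | hik
    · exact h.2 i hik hi
    · exact hk ⟨by omega, by rwa [show k - 1 = i by omega]⟩

open Classical in
theorem sum_isCut_neg_one_pow {R : Type*} [Ring R] {C : Set ℕ} {n : ℕ} (hn : n ≠ 0)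
    (hC : n - 1 ∈ C) :
    ∑ k ∈ range (n + 1), (if IsCut C k then (-1 : R) ^ (n - k) else 0) = 0 := by
  by_cases hup : ∃ j, C = Set.Ici j
  · obtain ⟨j, rfl⟩ := hup
    have hj : j + 1 ≤ n := by simp only [Set.mem_Ici] at hC; omega
    simp only [isCut_Ici_iff]
    rw [sum_eq_add_of_mem j (j + 1) (mem_range.2 (by omega)) (mem_range.2 (by omega)) (by omega)
      (fun k _ hk => if_neg (by omega)), if_pos (Or.inl rfl), if_pos (Or.inr rfl),
      show n - j = n - (j + 1) + 1 by omega, pow_succ]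
    simp
  · exact sum_eq_zero fun k _ => if_neg fun h => hup h.exists_eq_Ici

end Cuts

section TailStrictMono

variable {k m : ℕ}

def permHeadEmb (σ : Perm (Fin (k + m))) : Fin k ↪ Fin (k + m) :=
  (Fin.castAddEmb m).trans σ.toEmbedding

lemma card_compl_map_univ (f : Fin k ↪ Fin (k + m)) : #(univ.map f)ᶜ = m := by
  simp [card_compl]

def complRangeOrderEmb (f : Fin k ↪ Fin (k + m)) : Fin m ↪o Fin (k + m) :=
  (univ.map f)ᶜ.orderEmbOfFin (card_compl_map_univ f)

lemma ne_complRangeOrderEmb (f : Fin k ↪ Fin (k + m)) (i : Fin k) (j : Fin m) :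
    f i ≠ complRangeOrderEmb f j := by
  have := (univ.map f)ᶜ.orderEmbOfFin_mem (card_compl_map_univ f) j
  simp only [mem_compl, mem_map, mem_univ, true_and, not_exists] at this
  exact this i

noncomputable def permOfHeadEmb (f : Fin k ↪ Fin (k + m)) : Perm (Fin (k + m)) :=
  Equiv.ofBijective (Fin.append f (complRangeOrderEmb f)) <| Finite.injective_iff_bijective.mp <|
    Fin.append_injective_iff.mpr
      ⟨f.injective, (complRangeOrderEmb f).injective, ne_complRangeOrderEmb f⟩

lemma permHeadEmb_permOfHeadEmb (f : Fin k ↪ Fin (k + m)) :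
    permHeadEmb (permOfHeadEmb f) = f := by
  ext i
  simp [permHeadEmb, permOfHeadEmb]

lemma permOfHeadEmb_comp_natAdd (f : Fin k ↪ Fin (k + m)) :
    permOfHeadEmb f ∘ Fin.natAdd k = complRangeOrderEmb f := by
  ext j
  simp [permOfHeadEmb]

lemma comp_natAdd_eq_complRangeOrderEmb {σ : Perm (Fin (k + m))}
    (hσ : StrictMono (σ ∘ Fin.natAdd k)) :
    σ ∘ Fin.natAdd k = complRangeOrderEmb (permHeadEmb σ) := by
  refine orderEmbOfFin_unique _ (fun j => ?_) hσ
  simp only [mem_compl, mem_map, mem_univ, true_and, not_exists, permHeadEmb,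
    Function.Embedding.trans_apply, Fin.coe_castAddEmb, Equiv.coe_toEmbedding,
    Function.comp_apply]
  intro i h
  have := congrArg Fin.val (σ.injective h)
  simp only [Fin.val_castAdd, Fin.val_natAdd] at this
  omega

lemma permOfHeadEmb_permHeadEmb {σ : Perm (Fin (k + m))} (hσ : StrictMono (σ ∘ Fin.natAdd k)) :
    permOfHeadEmb (permHeadEmb σ) = σ := by
  ext x
  refine Fin.addCases (fun i => ?_) (fun j => ?_) x
  · simp [permOfHeadEmb, permHeadEmb]
  · simp [permOfHeadEmb, ← comp_natAdd_eq_complRangeOrderEmb hσ]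

noncomputable def tailStrictMonoPermEquiv :
    {σ : Perm (Fin (k + m)) // StrictMono (σ ∘ Fin.natAdd k)} ≃ (Fin k ↪ Fin (k + m)) where
  toFun σ := permHeadEmb σ
  invFun f := ⟨permOfHeadEmb f,
    permOfHeadEmb_comp_natAdd f ▸ (complRangeOrderEmb f).strictMono⟩
  left_inv σ := Subtype.ext (permOfHeadEmb_permHeadEmb σ.2)
  right_inv := permHeadEmb_permOfHeadEmb

end TailStrictMono

section Pattern

variable {β : Type*} [LinearOrder β] {k : ℕ}

def embeddingOfPattern (p : {A : Finset β // #A = k} × Perm (Fin k)) : Fin k ↪ β :=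
  p.2.toEmbedding.trans (p.1.1.orderEmbOfFin p.1.2).toEmbedding

lemma embeddingOfPattern_injective :
    Function.Injective (embeddingOfPattern (β := β) (k := k)) := by
  rintro ⟨⟨A, hA⟩, π⟩ ⟨⟨B, hB⟩, ρ⟩ h
  have hrange := congrArg Set.range (congrArg DFunLike.coe h)
  simp only [embeddingOfPattern, Function.Embedding.coe_trans, Equiv.coe_toEmbedding,
    RelEmbedding.coe_toEmbedding, π.surjective.range_comp, ρ.surjective.range_comp,
    range_orderEmbOfFin, coe_inj] at hrange
  subst hrange
  refine Prod.ext rfl (Equiv.ext fun i => (A.orderEmbOfFin hA).injective ?_)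
  exact DFunLike.congr_fun h i

noncomputable def patternEquiv [Fintype β] :
    {A : Finset β // #A = k} × Perm (Fin k) ≃ (Fin k ↪ β) :=
  Equiv.ofBijective embeddingOfPattern <|
    (Fintype.bijective_iff_injective_and_card _).mpr ⟨embeddingOfPattern_injective, by
      simp [Fintype.card_embedding_eq, Nat.descFactorial_eq_factorial_mul_choose,
        Fintype.card_perm, mul_comm]⟩

end Pattern

section Counting

variable {k m : ℕ}

noncomputable def standardize : {A : Finset (Fin (k + m)) // #A = k} × Perm (Fin k) ≃
    {σ : Perm (Fin (k + m)) // StrictMono (σ ∘ Fin.natAdd k)} :=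
  patternEquiv.trans tailStrictMonoPermEquiv.symm

lemma standardize_comp_castAdd (p : {A : Finset (Fin (k + m)) // #A = k} × Perm (Fin k)) :
    ⇑(standardize p).1 ∘ Fin.castAdd m = p.1.1.orderEmbOfFin p.1.2 ∘ p.2 :=
  congrArg DFunLike.coe (tailStrictMonoPermEquiv.apply_symm_apply (patternEquiv p))

lemma commonAscents_standardize {ι : Type*}
    (p : ι → {A : Finset (Fin (k + m)) // #A = k} × Perm (Fin k)) :
    commonAscents (fun j => ⇑(standardize (p j)).1 ∘ Fin.castAdd m) =
      commonAscents (fun j => ⇑(p j).2) := by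
  ext i
  refine forall_congr' fun j => ?_
  dsimp only
  rw [standardize_comp_castAdd]
  exact (OrderEmbedding.strictMono _).isAscentAt_comp_iff _ i

theorem card_isCut_commonAscents (r k m : ℕ) :
    Nat.card {τ : Fin r → Perm (Fin (k + m)) // IsCut (commonAscents fun j => ⇑(τ j)) k} =
      (k + m).choose k ^ r * countNoCommonAscent r k := by
  let E : (Fin r → Perm (Fin k)) × (Fin r → {A : Finset (Fin (k + m)) // #A = k}) ≃
      {τ : Fin r → Perm (Fin (k + m)) // ∀ j, StrictMono (τ j ∘ Fin.natAdd k)} :=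
    (Equiv.prodComm _ _).trans <| (Equiv.arrowProdEquivProdArrow _ _ _).symm.trans <|
      (Equiv.piCongrRight fun _ => standardize).trans Equiv.subtypePiEquivPi.symm
  calc _ = Nat.card {τ : {τ : Fin r → Perm (Fin (k + m)) //
          ∀ j, StrictMono (τ j ∘ Fin.natAdd k)} //
          NoCommonAscentBelow (fun j => ⇑(τ.1 j) ∘ Fin.castAdd m) k} :=
        Nat.card_congr <| (Equiv.subtypeEquivRight fun τ => isCut_commonAscents_iff _).trans
          (Equiv.subtypeSubtypeEquivSubtypeInter _ _).symm
    _ = Nat.card {p : (Fin r → Perm (Fin k)) × (Fin r → {A : Finset (Fin (k + m)) // #A = k}) //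
          NoCommonAscentBelow (fun j => ⇑(p.1 j)) k} :=
        Nat.card_congr (E.subtypeEquiv fun p => by
          rw [NoCommonAscentBelow, NoCommonAscentBelow,
            ← commonAscents_standardize (fun j => (p.2 j, p.1 j))]
          rfl).symm
    _ = _ := by
      refine (Nat.card_congr (Equiv.prodSubtypeFstEquivSubtypeProd
        (p := fun π : Fin r → Perm (Fin k) => NoCommonAscentBelow (fun j => ⇑(π j)) k))).trans ?_
      rw [Nat.card_prod, Nat.card_pi]
      simp [countNoCommonAscent, mul_comm]

end Counting

theorem sum_neg_one_pow_mul_choose_pow_mul_countNoCommonAscent {R : Type*} [CommRing R]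
    (r : ℕ) {n : ℕ} (hn : n ≠ 0) :
    ∑ k ∈ range (n + 1),
      (-1 : R) ^ (n - k) * ((n.choose k ^ r * countNoCommonAscent r k : ℕ) : R) = 0 := by
  classical
  have hcard : ∀ k ∈ range (n + 1), ((n.choose k ^ r * countNoCommonAscent r k : ℕ) : R) =
      ∑ τ : Fin r → Perm (Fin n), if IsCut (commonAscents fun j => ⇑(τ j)) k then 1 else 0 := by
    intro k hk
    obtain ⟨m, rfl⟩ := Nat.exists_eq_add_of_le (mem_range_succ_iff.1 hk)
    rw [← card_isCut_commonAscents, Nat.card_eq_fintype_card, Fintype.card_subtype, card_filter]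
    push_cast
    rfl
  simp_rw [sum_congr rfl fun k hk => congrArg _ (hcard k hk), mul_sum, mul_ite, mul_one, mul_zero]
  rw [sum_comm]
  exact sum_eq_zero fun τ _ => sum_isCut_neg_one_pow hn (mem_commonAscents_of_le _ (by omega))

lemma countNoCommonAscent_zero (r : ℕ) : countNoCommonAscent r 0 = 1 := by
  rw [countNoCommonAscent, Nat.card_eq_one_iff_unique]
  exact ⟨⟨fun _ _ => Subtype.ext (Subsingleton.elim _ _)⟩, ⟨⟨1, fun i hi => by omega⟩⟩⟩

open Nat in
theorem mk_countNoCommonAscent_mul_mk_neg_one_pow {K : Type*} [Field K] [CharZero K] (r : ℕ) :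
    (mk fun n => (countNoCommonAscent r n : K) / (n ! : K) ^ r) *
      (mk fun n => (-1 : K) ^ n / (n ! : K) ^ r) = 1 := by
  ext n
  have hterm : ∀ k ∈ range (n + 1), (countNoCommonAscent r k : K) / (k ! : K) ^ r *
      ((-1) ^ (n - k) / ((n - k)! : K) ^ r) =
      (-1) ^ (n - k) * ((n.choose k ^ r * countNoCommonAscent r k : ℕ) : K) / (n ! : K) ^ r := by
    intro k hk
    have hkn := mem_range_succ_iff.1 hk
    have hchoose : (n.choose k : K) ≠ 0 := Nat.cast_ne_zero.2 (choose_pos hkn).ne'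
    rw [← choose_mul_factorial_mul_factorial hkn]
    push_cast
    rw [mul_pow, mul_pow]
    field_simp
  rw [coeff_mul, Finset.Nat.sum_antidiagonal_eq_sum_range_succ_mk]
  simp only [coeff_mk]
  rw [sum_congr rfl hterm, ← sum_div, coeff_one]
  rcases eq_or_ne n 0 with rfl | hn
  · simp [countNoCommonAscent_zero]
  · rw [sum_neg_one_pow_mul_choose_pow_mul_countNoCommonAscent r hn, zero_div, if_neg hn]

theorem stmt_7_general (r : ℕ) (h : ℕ → ℚ)
    (hh : (PowerSeries.mk fun n => h n / ((Nat.factorial n : ℚ)) ^ r) *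
      (PowerSeries.mk fun n => (-1 : ℚ) ^ n / ((Nat.factorial n : ℚ)) ^ r) = 1) :
    ∀ n : ℕ, ∃ m : ℕ, h n = (m : ℚ) := by
  have hcount := left_inv_eq_right_inv hh
    ((mul_comm _ _).trans (mk_countNoCommonAscent_mul_mk_neg_one_pow r))
  intro n
  refine ⟨countNoCommonAscent r n, ?_⟩
  have := congrArg (coeff n) hcount
  simp only [coeff_mk] at this
  exact (div_left_inj' (pow_ne_zero r (Nat.cast_ne_zero.2 n.factorial_ne_zero))).1 this

/-- Fix `r ≥ 1`. If `∑_{n≥0} h_n x^n/(n!)^r = (∑_{n≥0} (-1)^n x^n/(n!)^r)⁻¹` as formal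
power series over `ℚ` (i.e. the product of the two series is `1`), then each `h_n`
is a nonnegative integer. -/
theorem stmt_7 (r : ℕ) (hr : 1 ≤ r) (h : ℕ → ℚ)
    (hh : (PowerSeries.mk fun n => h n / ((Nat.factorial n : ℚ)) ^ r) *
      (PowerSeries.mk fun n => (-1 : ℚ) ^ n / ((Nat.factorial n : ℚ)) ^ r) = 1) :
    ∀ n : ℕ, ∃ m : ℕ, h n = (m : ℚ) :=
  stmt_7_general r h hh
end

section
/- Define the sequence r_n by ∑_{n≥1} r_n z^n/(n!)^r = -log(∑_{n≥0} (-1)^n z^n/(n!)^r). Then each r_n is an integer. -/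
/-!
Comparing the coefficients of `zⁿ` in `g · L' = -g'` and multiplying by `((n+1)!)^r / (n+1)` gives
`∑_{i+j=n} (-1)^i C(n+1, j+1)^(r-1) C(n, j) r_{j+1} = (-1)^n`, because
`((n+1)!)^r (j+1) / ((n+1) (i! (j+1)!)^r) = C(n+1, j+1)^(r-1) C(n, j)` is an integer as soon as
`r ≥ 1`. The term `i = 0` has coefficient `1`, so this unitriangular system with integer
coefficients determines `r_{n+1}` integrally from `r_1, …, r_n`.
-/

open PowerSeries Finset Nat

theorem mem_of_sum_antidiagonal_mul_eq {R : Type*} [Ring R] (S : Subring R) {c : ℕ → ℕ → R}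
    {e x : ℕ → R} (hc : ∀ i j, c i j ∈ S) (hc0 : ∀ j, c 0 j = 1) (he : ∀ n, e n ∈ S)
    (h : ∀ n, ∑ p ∈ antidiagonal n, c p.1 p.2 * x p.2 = e n) (n : ℕ) : x n ∈ S := by
  induction n using Nat.strong_induction_on with
  | _ n ih =>
    cases n with
    | zero =>
      have h0 := h 0
      simp only [Nat.antidiagonal_zero, sum_singleton, hc0, one_mul] at h0
      exact h0 ▸ he 0
    | succ n =>
      have hn := h (n + 1)
      rw [Nat.sum_antidiagonal_succ, hc0, one_mul] at hn
      rw [eq_sub_of_add_eq hn]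
      refine sub_mem (he _) (sum_mem fun p hp => mul_mem (hc _ _) (ih _ ?_))
      have := mem_antidiagonal.mp hp
      omega

def choosePowWeight (r i j : ℕ) : ℕ := (i + j + 1).choose (j + 1) ^ (r - 1) * (i + j).choose j

theorem factorial_pow_mul_eq_choosePowWeight (r i j : ℕ) (hr : 1 ≤ r) :
    (i + j + 1)! ^ r * (j + 1) = (i + j + 1) * choosePowWeight r i j * (i ! * (j + 1)!) ^ r := by
  obtain ⟨s, rfl⟩ : ∃ s, r = s + 1 := ⟨r - 1, by omega⟩
  set C := (i + j + 1).choose (j + 1)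
  have hfac : C * i ! * (j + 1)! = (i + j + 1)! := add_choose_mul_factorial_mul_factorial i (j + 1)
  have hch : (i + j + 1) * (i + j).choose j = C * (j + 1) := add_one_mul_choose_eq (i + j) j
  rw [choosePowWeight, ← hfac]
  calc _ = C ^ s * (C * (j + 1)) * (i ! * (j + 1)!) ^ (s + 1) := by ring
    _ = _ := by rw [← hch]; simp only [Nat.add_sub_cancel]; ring

theorem factorial_pow_mul_coeff_mul_derivative (r : ℕ) (hr : 1 ≤ r) (a b : ℕ → ℚ) (n : ℕ) :
    ((n + 1)! : ℚ) ^ r *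
        coeff n (mk (fun i => a i / (i ! : ℚ) ^ r) * d⁄dX ℚ (mk fun j => b j / (j ! : ℚ) ^ r)) =
      (n + 1) * ∑ p ∈ antidiagonal n, (choosePowWeight r p.1 p.2 : ℚ) * a p.1 * b (p.2 + 1) := by
  rw [coeff_mul, mul_sum, mul_sum]
  refine sum_congr rfl fun ⟨i, j⟩ hp => ?_
  obtain rfl : i + j = n := mem_antidiagonal.mp hp
  have key : ((i + j + 1)! : ℚ) ^ r * (j + 1) =
      (i + j + 1) * choosePowWeight r i j * (i ! * (j + 1)! : ℚ) ^ r := by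
    exact_mod_cast factorial_pow_mul_eq_choosePowWeight r i j hr
  simp only [coeff_mk, coeff_derivative]
  field_simp
  push_cast
  linear_combination a i * b (j + 1) * key

/-- Fix `r ≥ 2`. If `∑_{n≥1} r_n z^n/(n!)^r = -log (∑_{n≥0} (-1)^n z^n/(n!)^r)` as
formal power series over `ℚ` (the logarithm characterized by: the left side `L` has
constant term `0` and `g * L' = -g'` where `g` is the series being logarithmed), then
each `r_n` is an integer. -/
theorem stmt_8 (r : ℕ) (hr : 2 ≤ r) (rseq : ℕ → ℚ)
    (L g : PowerSeries ℚ)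
    (hL : L = PowerSeries.mk fun n =>
      if n ≠ 0 then rseq n / ((Nat.factorial n : ℚ)) ^ r else 0)
    (hg : g = PowerSeries.mk fun n => (-1 : ℚ) ^ n / ((Nat.factorial n : ℚ)) ^ r)
    (hlog : g * L.derivativeFun = -g.derivativeFun) :
    ∀ n : ℕ, 1 ≤ n → ∃ m : ℤ, rseq n = (m : ℚ) := by
  change g * d⁄dX ℚ L = -d⁄dX ℚ g at hlog
  have hL' : d⁄dX ℚ L = d⁄dX ℚ (mk fun j => rseq j / (j ! : ℚ) ^ r) := by
    ext n
    simp [hL, coeff_derivative]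
  have hrec (n : ℕ) :
      ∑ p ∈ antidiagonal n, (choosePowWeight r p.1 p.2 * (-1) ^ p.1 : ℚ) * rseq (p.2 + 1) =
        (-1) ^ n := by
    have h := congrArg (fun f => ((n + 1)! : ℚ) ^ r * coeff n f) hlog
    rw [hL', hg, factorial_pow_mul_coeff_mul_derivative r (by omega)] at h
    rw [map_neg, coeff_derivative, coeff_mk] at h
    refine mul_left_cancel₀ (by positivity : (n + 1 : ℚ) ≠ 0) (h.trans ?_)
    field_simp
    ring
  intro n hn
  obtain ⟨n, rfl⟩ := Nat.exists_eq_add_of_le' hn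
  obtain ⟨m, hm⟩ := Subring.mem_bot.mp <| mem_of_sum_antidiagonal_mul_eq ⊥
    (c := fun i j => (choosePowWeight r i j * (-1) ^ i : ℚ)) (x := fun j => rseq (j + 1))
    (fun i j => mul_mem (natCast_mem _ _) (pow_mem (neg_mem (one_mem _)) _))
    (fun j => by simp [choosePowWeight]) (fun n => pow_mem (neg_mem (one_mem _)) _) hrec n
  exact ⟨m, hm.symm⟩
end

section
/- Let ω(n) count pairs of permutations of [n] with no common rise and let τ(n) be defined by ∑_{n≥0} τ(n) x^n/(n!)^2 = (∑_{n≥0} (-1)^n x^n/(n!)^2)^{-1}. Then ω(n) = τ(n) for all n. -/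
/-!
Let `T(n, k)` count the pairs that increase on their first `k` positions and have no common
rise at a position `≥ k` (`ncrPairs n k k`). Such a pair is determined by the two `k`-sets of
values in its prefixes and by the relative orders of its two suffixes, which form a pair of
permutations of `[n - k]` without common rise; hence `T(n, k) = C(n, k)² ω(n - k)`. Sorting the
pairs counted by `T(n, k + 1)` by whether `k` is a common rise gives
`T(n, k + 1) = U(k) + U(k + 1)`, where `U(k)` counts the pairs increasing on their first `k + 1`
positions with no common rise at a position `≥ k` (`ncrPairs n (k + 1) k`). So
`∑ₖ (-1)ᵏ T(n, k)` telescopes to `0` for `n ≥ 1`, which is the coefficient identity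
`(∑ (-1)ⁿ xⁿ/n!²) (∑ ω(n) xⁿ/n!²) = 1`.
-/

open PowerSeries

open Finset Equiv

section Rises

variable {n : ℕ}

def IsCommonRise (π ξ : Perm (Fin n)) (i : ℕ) : Prop :=
  ∃ h : i + 1 < n, π ⟨i, Nat.lt_of_succ_lt h⟩ < π ⟨i + 1, h⟩ ∧
    ξ ⟨i, Nat.lt_of_succ_lt h⟩ < ξ ⟨i + 1, h⟩

def NoCommonRiseFrom (b : ℕ) (π ξ : Perm (Fin n)) : Prop :=
  ∀ i, b ≤ i → ¬ IsCommonRise π ξ i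

def IsIncreasingOnPrefix (a : ℕ) (π : Perm (Fin n)) : Prop :=
  ∀ i (h : i + 1 < n), i + 1 < a → π ⟨i, Nat.lt_of_succ_lt h⟩ < π ⟨i + 1, h⟩

theorem hasNoCommonRise_iff {π ξ : Perm (Fin n)} :
    HasNoCommonRise π ξ ↔ ∀ i, ¬ IsCommonRise π ξ i :=
  not_exists

theorem noCommonRiseFrom_iff_succ {b : ℕ} {π ξ : Perm (Fin n)} :
    NoCommonRiseFrom b π ξ ↔ ¬ IsCommonRise π ξ b ∧ NoCommonRiseFrom (b + 1) π ξ := by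
  constructor
  · intro h
    exact ⟨h b le_rfl, fun i hi => h i (by omega)⟩
  · rintro ⟨hb, h⟩ i hi
    rcases hi.eq_or_lt with rfl | hlt
    exacts [hb, h i hlt]

theorem noCommonRiseFrom_of_le {b : ℕ} (hb : n ≤ b + 1) (π ξ : Perm (Fin n)) :
    NoCommonRiseFrom b π ξ :=
  fun _ hi ⟨h, _⟩ => by omega

theorem isIncreasingOnPrefix_of_le_one {a : ℕ} (ha : a ≤ 1) (π : Perm (Fin n)) :
    IsIncreasingOnPrefix a π :=
  fun _ _ hi => absurd hi (by omega)

theorem isIncreasingOnPrefix_succ_succ {m : ℕ} (h : m + 1 < n) {π : Perm (Fin n)} :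
    IsIncreasingOnPrefix (m + 2) π ↔
      IsIncreasingOnPrefix (m + 1) π ∧ π ⟨m, Nat.lt_of_succ_lt h⟩ < π ⟨m + 1, h⟩ := by
  constructor
  · intro hπ
    exact ⟨fun i hi hlt => hπ i hi (by omega), hπ m h (by omega)⟩
  · rintro ⟨hπ, hm⟩ i hi hlt
    rcases Nat.lt_or_ge (i + 1) (m + 1) with hlt' | hge
    · exact hπ i hi hlt'
    · obtain rfl : i = m := by omega
      exact hm

theorem IsIncreasingOnPrefix.strictMono_castAdd {k m : ℕ} {π : Perm (Fin (k + m))}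
    (hπ : IsIncreasingOnPrefix k π) : StrictMono fun i : Fin k => π (Fin.castAdd m i) := by
  cases k with
  | zero => exact fun i => i.elim0
  | succ k =>
    refine Fin.strictMono_iff_lt_succ.2 fun i => hπ i ?_ ?_ <;> have := i.isLt <;> omega

end Rises

def ncrPairs (n a b : ℕ) : Set (Perm (Fin n) × Perm (Fin n)) :=
  {p | IsIncreasingOnPrefix a p.1 ∧ IsIncreasingOnPrefix a p.2 ∧ NoCommonRiseFrom b p.1 p.2}

theorem ncard_ncrPairs_succ {n m : ℕ} (h : m + 1 < n) :
    (ncrPairs n (m + 1) (m + 1)).ncard =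
      (ncrPairs n (m + 1) m).ncard + (ncrPairs n (m + 2) (m + 1)).ncard := by
  rw [← Set.ncard_inter_add_ncard_sdiff_eq_ncard _ {p | IsCommonRise p.1 p.2 m}, add_comm]
  congr 2
  · ext p
    simp only [ncrPairs, Set.mem_sdiff, Set.mem_ofPred_eq, noCommonRiseFrom_iff_succ (b := m)]
    tauto
  · ext p
    simp only [ncrPairs, Set.mem_inter_iff, Set.mem_ofPred_eq, IsCommonRise,
      isIncreasingOnPrefix_succ_succ h, exists_prop_of_true h]
    tauto

theorem sum_range_neg_one_pow_mul_of_eq_add {R : Type*} [CommRing R] {t u : ℕ → R} {m : ℕ}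
    (h0 : t 0 = u 0) (hsucc : ∀ i < m, t (i + 1) = u i + u (i + 1)) :
    ∑ i ∈ range (m + 1), (-1) ^ i * t i = (-1) ^ m * u m := by
  induction m with
  | zero => simp [h0]
  | succ m ih =>
    rw [sum_range_succ, ih fun i hi => hsucc i (by omega), hsucc m (by omega)]
    ring

theorem sum_range_neg_one_pow_mul_ncard_ncrPairs {n : ℕ} (hn : n ≠ 0) :
    ∑ i ∈ range (n + 1), (-1 : ℚ) ^ i * (ncrPairs n i i).ncard = 0 := by
  obtain ⟨m, rfl⟩ := Nat.exists_eq_succ_of_ne_zero hn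
  have h0 : ncrPairs (m + 1) 0 0 = ncrPairs (m + 1) 1 0 := by
    simp only [ncrPairs, isIncreasingOnPrefix_of_le_one (Nat.zero_le 1),
      isIncreasingOnPrefix_of_le_one le_rfl]
  have hlast : ncrPairs (m + 1) (m + 1) (m + 1) = ncrPairs (m + 1) (m + 1) m := by
    simp only [ncrPairs, noCommonRiseFrom_of_le (Nat.le_succ _), noCommonRiseFrom_of_le le_rfl]
  rw [sum_range_succ, sum_range_neg_one_pow_mul_of_eq_add
    (u := fun i => ((ncrPairs (m + 1) (i + 1) i).ncard : ℚ)) (by rw [h0])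
    fun i hi => by exact_mod_cast ncard_ncrPairs_succ (by omega), hlast, pow_succ]
  ring

section PrefixPerm

variable {k m : ℕ} (A : Finset (Fin (k + m)))

theorem card_compl_of_card_eq (hA : #A = k) : #Aᶜ = m := by
  rw [card_compl, Fintype.card_fin, hA, Nat.add_sub_cancel_left]

variable (hA : #A = k)

/-- The word listing `A` increasingly, followed by `Aᶜ` in the relative order `σ`. -/
noncomputable def prefixPerm (σ : Perm (Fin m)) : Perm (Fin (k + m)) :=
  .ofBijective
    (Fin.append (A.orderEmbOfFin hA) (Aᶜ.orderEmbOfFin (card_compl_of_card_eq A hA) ∘ σ)) <|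
    Finite.injective_iff_bijective.1 <| Fin.append_injective_iff.2
      ⟨(A.orderEmbOfFin hA).injective, (Aᶜ.orderEmbOfFin _).injective.comp σ.injective,
        fun i j h => mem_compl.1 (orderEmbOfFin_mem Aᶜ _ (σ j)) (h ▸ orderEmbOfFin_mem A hA i)⟩

variable (σ : Perm (Fin m))

@[simp]
theorem prefixPerm_castAdd (i : Fin k) :
    prefixPerm A hA σ (Fin.castAdd m i) = A.orderEmbOfFin hA i := by
  simp [prefixPerm]

@[simp]
theorem prefixPerm_natAdd (j : Fin m) :
    prefixPerm A hA σ (Fin.natAdd k j) = Aᶜ.orderEmbOfFin (card_compl_of_card_eq A hA) (σ j) := by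
  simp [prefixPerm]

theorem isIncreasingOnPrefix_prefixPerm : IsIncreasingOnPrefix k (prefixPerm A hA σ) :=
  fun i _ hi => by
    show prefixPerm A hA σ (Fin.castAdd m ⟨i, by omega⟩) <
      prefixPerm A hA σ (Fin.castAdd m ⟨i + 1, hi⟩)
    rw [prefixPerm_castAdd, prefixPerm_castAdd, OrderEmbedding.lt_iff_lt, Fin.mk_lt_mk]
    exact i.lt_succ_self

theorem prefixPerm_natAdd_lt_iff (i j : Fin m) :
    prefixPerm A hA σ (Fin.natAdd k i) < prefixPerm A hA σ (Fin.natAdd k j) ↔ σ i < σ j := by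
  rw [prefixPerm_natAdd, prefixPerm_natAdd, OrderEmbedding.lt_iff_lt]

theorem isCommonRise_prefixPerm_add_iff {B : Finset (Fin (k + m))} (hB : #B = k)
    (τ : Perm (Fin m)) (j : ℕ) :
    IsCommonRise (prefixPerm A hA σ) (prefixPerm B hB τ) (k + j) ↔ IsCommonRise σ τ j := by
  constructor
  · rintro ⟨h, hσ, hτ⟩
    have hj : j + 1 < m := by omega
    exact ⟨hj, (prefixPerm_natAdd_lt_iff A hA σ ⟨j, by omega⟩ ⟨j + 1, hj⟩).1 hσ,
      (prefixPerm_natAdd_lt_iff B hB τ ⟨j, by omega⟩ ⟨j + 1, hj⟩).1 hτ⟩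
  · rintro ⟨h, hσ, hτ⟩
    exact ⟨by omega, (prefixPerm_natAdd_lt_iff A hA σ ⟨j, by omega⟩ ⟨j + 1, h⟩).2 hσ,
      (prefixPerm_natAdd_lt_iff B hB τ ⟨j, by omega⟩ ⟨j + 1, h⟩).2 hτ⟩

theorem noCommonRiseFrom_prefixPerm_iff {B : Finset (Fin (k + m))} (hB : #B = k)
    (τ : Perm (Fin m)) :
    NoCommonRiseFrom k (prefixPerm A hA σ) (prefixPerm B hB τ) ↔ HasNoCommonRise σ τ := by
  rw [hasNoCommonRise_iff]
  constructor
  · intro h j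
    rw [← isCommonRise_prefixPerm_add_iff A hA σ hB τ]
    exact h _ (Nat.le_add_right k j)
  · intro h i hi
    obtain ⟨j, rfl⟩ := Nat.exists_eq_add_of_le hi
    rw [isCommonRise_prefixPerm_add_iff]
    exact h j

theorem image_prefixPerm_castAdd :
    univ.image (fun i : Fin k => prefixPerm A hA σ (Fin.castAdd m i)) = A := by
  simp

theorem prefixPerm_injective :
    Function.Injective fun x : {A : Finset (Fin (k + m)) // #A = k} × Perm (Fin m) =>
      prefixPerm x.1.1 x.1.2 x.2 := by
  rintro ⟨⟨A, hA⟩, σ⟩ ⟨⟨A', hA'⟩, σ'⟩ h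
  dsimp only at h
  obtain rfl : A = A' := by
    rw [← image_prefixPerm_castAdd A hA σ, h, image_prefixPerm_castAdd]
  obtain rfl : σ = σ' := Equiv.ext fun j => (Aᶜ.orderEmbOfFin _).injective <| by
    rw [← prefixPerm_natAdd A hA, h, prefixPerm_natAdd]
  rfl

theorem exists_prefixPerm_eq {π : Perm (Fin (k + m))} (hπ : IsIncreasingOnPrefix k π) :
    ∃ (A : Finset (Fin (k + m))) (hA : #A = k) (σ : Perm (Fin m)), prefixPerm A hA σ = π := by
  classical
  set A := univ.image fun i : Fin k => π (Fin.castAdd m i)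
  have hA : #A = k := by
    rw [card_image_of_injective _ hπ.strictMono_castAdd.injective, card_univ, Fintype.card_fin]
  have hcompl (j : Fin m) : π (Fin.natAdd k j) ∈ Aᶜ := by
    simp only [A, mem_compl, mem_image, mem_univ, true_and, π.apply_eq_iff_eq, not_exists]
    exact fun i h => absurd (congrArg Fin.val h) (by simp; omega)
  set e := (Aᶜ.orderIsoOfFin (card_compl_of_card_eq A hA)).symm
  have he : Function.Injective fun j => e ⟨π (Fin.natAdd k j), hcompl j⟩ := fun i j hij => by
    simpa using e.injective hij
  refine ⟨A, hA, .ofBijective _ (Finite.injective_iff_bijective.1 he), Equiv.ext ?_⟩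
  refine Fin.addCases (fun i => ?_) (fun j => ?_)
  · rw [prefixPerm_castAdd]
    exact congrFun (orderEmbOfFin_unique hA (by simp [A]) hπ.strictMono_castAdd).symm i
  · rw [prefixPerm_natAdd, ← coe_orderIsoOfFin_apply]
    simp [e]

end PrefixPerm

theorem ncard_ncrPairs_add (k m : ℕ) :
    (ncrPairs (k + m) k k).ncard = (k + m).choose k ^ 2 * omegaNCR m := by
  set f := fun x : {A : Finset (Fin (k + m)) // #A = k} × Perm (Fin m) =>
    prefixPerm x.1.1 x.1.2 x.2
  set g := Prod.map f f ∘ Equiv.prodProdProdComm {A : Finset (Fin (k + m)) // #A = k}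
    {A : Finset (Fin (k + m)) // #A = k} (Perm (Fin m)) (Perm (Fin m))
  have hg : Function.Injective g :=
    (prefixPerm_injective.prodMap prefixPerm_injective).comp (Equiv.injective _)
  have himage : ncrPairs (k + m) k k = g '' (Set.univ ×ˢ {q | HasNoCommonRise q.1 q.2}) := by
    ext ⟨π, ξ⟩
    constructor
    · rintro ⟨hπ, hξ, hncr⟩
      obtain ⟨A, hA, σ, rfl⟩ := exists_prefixPerm_eq hπ
      obtain ⟨B, hB, τ, rfl⟩ := exists_prefixPerm_eq hξ
      exact ⟨((⟨A, hA⟩, ⟨B, hB⟩), (σ, τ)),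
        ⟨trivial, (noCommonRiseFrom_prefixPerm_iff A hA σ hB τ).1 hncr⟩, rfl⟩
    · rintro ⟨⟨⟨⟨A, hA⟩, ⟨B, hB⟩⟩, ⟨σ, τ⟩⟩, ⟨-, hncr⟩, hg⟩
      cases hg
      exact ⟨isIncreasingOnPrefix_prefixPerm A hA σ, isIncreasingOnPrefix_prefixPerm B hB τ,
        (noCommonRiseFrom_prefixPerm_iff A hA σ hB τ).2 hncr⟩
  rw [himage, Set.ncard_image_of_injective _ hg, Set.ncard_prod, Set.ncard_univ, Nat.card_prod,
    Nat.card_eq_fintype_card, Fintype.card_finset_len, Fintype.card_fin, sq]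
  rfl

theorem omegaNCR_zero : omegaNCR 0 = 1 :=
  Nat.card_eq_one_iff_unique.2 ⟨inferInstance, ⟨⟨(1, 1), fun ⟨_, h, _⟩ => by omega⟩⟩⟩

theorem alternating_series_mul_omegaNCR_series :
    (PowerSeries.mk fun n => (-1 : ℚ) ^ n / ((Nat.factorial n : ℚ)) ^ 2) *
      (PowerSeries.mk fun n => (omegaNCR n : ℚ) / ((Nat.factorial n : ℚ)) ^ 2) = 1 := by
  ext n
  rcases eq_or_ne n 0 with rfl | hn
  · simp [omegaNCR_zero]
  have hterm : ∀ p ∈ antidiagonal n,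
      (-1 : ℚ) ^ p.1 / (p.1.factorial : ℚ) ^ 2 * ((omegaNCR p.2 : ℚ) / (p.2.factorial : ℚ) ^ 2) =
        (-1) ^ p.1 * (ncrPairs n p.1 p.1).ncard / (n.factorial : ℚ) ^ 2 := by
    rintro ⟨i, j⟩ hij
    rw [HasAntidiagonal.mem_antidiagonal] at hij
    subst hij
    rw [ncard_ncrPairs_add, Nat.cast_mul, Nat.cast_pow, Nat.cast_choose ℚ (Nat.le_add_right i j),
      Nat.add_sub_cancel_left]
    field_simp
  simp only [coeff_mul, coeff_mk, coeff_one, if_neg hn]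
  rw [sum_congr rfl hterm, Nat.sum_antidiagonal_eq_sum_range_succ
    (fun i _ => (-1 : ℚ) ^ i * (ncrPairs n i i).ncard / (n.factorial : ℚ) ^ 2), ← sum_div,
    sum_range_neg_one_pow_mul_ncard_ncrPairs hn, zero_div]

/-- If `τ` satisfies `∑_{n≥0} τ(n) x^n/(n!)^2 = (∑_{n≥0} (-1)^n x^n/(n!)^2)⁻¹`
(i.e. the product of the two series is `1`), then `ω(n) = τ(n)` for all `n`. -/
theorem stmt_16 (τ : ℕ → ℚ)
    (hτ : (PowerSeries.mk fun n => τ n / ((Nat.factorial n : ℚ)) ^ 2) *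
      (PowerSeries.mk fun n => (-1 : ℚ) ^ n / ((Nat.factorial n : ℚ)) ^ 2) = 1) :
    ∀ n : ℕ, (omegaNCR n : ℚ) = τ n := by
  intro n
  have h := congrArg (coeff n) (left_inv_eq_right_inv hτ alternating_series_mul_omegaNCR_series)
  simp only [coeff_mk] at h
  exact ((div_left_inj' (by positivity)).1 h).symm
end

section
/- Let f(z) = ∑_{n≥0} (-1)^n z^{rn}/(rn)!. Then the coefficient of z^{rn}/(rn)! in -log f(z) is a positive integer for every n ≥ 1 and r ≥ 2. -/
/-!
Write `D` for `d/dz` and `f` for the series. Integrality: call a series Hurwitz-integral if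
every `k! * coeff k` is an integer. By the binomial form of the product rule, a Hurwitz-integral
`f` with constant term `1` can be divided out of a Hurwitz-integral product, so
`f * D L = -D f` makes `D L`, hence `L`, Hurwitz-integral.

Positivity: since `D^r f = -f`, the series `g i = -D^i f / f` satisfy `g r = 1` and
`D (g i) = g (i + 1) + g i * g 1`, and `g i` has constant term `0` for `0 < i < r`. Reading this
system coefficientwise, induction shows that all coefficients of `g 1, …, g r` are nonnegative and
that `coeff m (g i)` is positive whenever `i + m` is a positive multiple of `r`. As
`g 1 = D L`, the coefficient of `z^{rn}` in `L` is positive.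
-/

open PowerSeries Finset Nat

namespace PowerSeries

section Factorial

variable {R : Type*} [CommSemiring R]

theorem factorial_mul_coeff_iterate_derivative (f : R⟦X⟧) (n k : ℕ) :
    (k ! : R) * coeff k ((d⁄dX R)^[n] f) = ((k + n)! : R) * coeff (k + n) f := by
  rw [coeff_iterate_derivative, ← mul_assoc, ← Nat.cast_mul, factorial_mul_ascFactorial]

theorem factorial_mul_coeff_derivative (f : R⟦X⟧) (k : ℕ) :
    (k ! : R) * coeff k (d⁄dX R f) = ((k + 1)! : R) * coeff (k + 1) f :=
  factorial_mul_coeff_iterate_derivative f 1 k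

theorem factorial_mul_coeff_mul (f g : R⟦X⟧) (k : ℕ) :
    (k ! : R) * coeff k (f * g) = ∑ p ∈ antidiagonal k,
      (k.choose p.1 : R) * ((p.1 ! : R) * coeff p.1 f) * ((p.2 ! : R) * coeff p.2 g) := by
  rw [coeff_mul, mul_sum]
  refine sum_congr rfl fun p hp => ?_
  rw [← mem_antidiagonal.1 hp, ← add_choose_mul_factorial_mul_factorial, choose_symm_add]
  push_cast
  ring

end Factorial

def IsHurwitzIntegral (f : ℚ⟦X⟧) : Prop :=
  ∀ k, (k ! : ℚ) * coeff k f ∈ (⊥ : Subring ℚ)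

namespace IsHurwitzIntegral

variable {f g : ℚ⟦X⟧}

theorem neg (hf : IsHurwitzIntegral f) : IsHurwitzIntegral (-f) := fun k => by
  simpa only [map_neg, mul_neg] using neg_mem (hf k)

theorem derivative (hf : IsHurwitzIntegral f) : IsHurwitzIntegral (d⁄dX ℚ f) := fun k => by
  simpa only [factorial_mul_coeff_derivative] using hf (k + 1)

theorem of_derivative (hf : IsHurwitzIntegral (d⁄dX ℚ f))
    (h0 : constantCoeff f ∈ (⊥ : Subring ℚ)) : IsHurwitzIntegral f
  | 0 => by simpa using h0
  | k + 1 => by simpa only [factorial_mul_coeff_derivative] using hf k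

theorem of_mul_left (hf : IsHurwitzIntegral f) (hf0 : constantCoeff f = 1)
    (hfg : IsHurwitzIntegral (f * g)) : IsHurwitzIntegral g := by
  intro k
  induction k using Nat.strong_induction_on with
  | _ k ih =>
  have hsplit := factorial_mul_coeff_mul f g k
  rw [← add_sum_erase _ _ (mem_antidiagonal.2 (zero_add k) : (0, k) ∈ antidiagonal k)] at hsplit
  simp only [choose_zero_right, factorial_zero, coeff_zero_eq_constantCoeff_apply, hf0,
    Nat.cast_one, one_mul] at hsplit
  rw [eq_sub_of_add_eq hsplit.symm]
  refine sub_mem (hfg k) <| sum_mem fun p hp =>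
    mul_mem (mul_mem (natCast_mem _ _) (hf _)) (ih _ ?_)
  obtain ⟨hp0, hp⟩ := mem_erase.1 hp
  rw [HasAntidiagonal.mem_antidiagonal] at hp
  by_contra! hk
  exact hp0 (Prod.ext (by omega) (by omega))

end IsHurwitzIntegral

def generalizedCos (r : ℕ) : ℚ⟦X⟧ :=
  mk fun k => if r ∣ k then (-1 : ℚ) ^ (k / r) / (k ! : ℚ) else 0

theorem factorial_mul_coeff_generalizedCos (r k : ℕ) :
    (k ! : ℚ) * coeff k (generalizedCos r) = if r ∣ k then (-1 : ℚ) ^ (k / r) else 0 := by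
  rw [generalizedCos, coeff_mk]
  split_ifs
  · exact mul_div_cancel₀ _ (mod_cast k.factorial_ne_zero)
  · exact mul_zero _

theorem constantCoeff_generalizedCos (r : ℕ) : constantCoeff (generalizedCos r) = 1 := by
  simpa using factorial_mul_coeff_generalizedCos r 0

theorem isHurwitzIntegral_generalizedCos (r : ℕ) : IsHurwitzIntegral (generalizedCos r) := by
  intro k
  rw [factorial_mul_coeff_generalizedCos]
  split_ifs
  · exact pow_mem (neg_mem (one_mem _)) _
  · exact zero_mem _

theorem iterate_derivative_generalizedCos {r : ℕ} (hr : 0 < r) :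
    (d⁄dX ℚ)^[r] (generalizedCos r) = -generalizedCos r := by
  ext k
  apply mul_left_cancel₀ (mod_cast k.factorial_ne_zero : (k ! : ℚ) ≠ 0)
  rw [factorial_mul_coeff_iterate_derivative, map_neg, mul_neg,
    factorial_mul_coeff_generalizedCos, factorial_mul_coeff_generalizedCos,
    Nat.add_div_right k hr, pow_succ]
  simp only [Nat.dvd_add_self_right]
  split_ifs <;> ring

theorem constantCoeff_iterate_derivative_generalizedCos {r i : ℕ} (hi : 0 < i) (hir : i < r) :
    constantCoeff ((d⁄dX ℚ)^[i] (generalizedCos r)) = 0 := by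
  rw [constantCoeff_iterate_derivative, factorial_mul_coeff_generalizedCos,
    if_neg (Nat.not_dvd_of_pos_of_lt hi hir)]

section DerivRatio

variable {K : Type*} [Field K]

-- `-f⁽ⁱ⁾ / f`; for `i = 1` this is the derivative of `-log f`.
noncomputable def derivRatio (f : K⟦X⟧) (i : ℕ) : K⟦X⟧ :=
  -(d⁄dX K)^[i] f * f⁻¹

theorem derivative_derivRatio (f : K⟦X⟧) (i : ℕ) :
    d⁄dX K (derivRatio f i) = derivRatio f (i + 1) + derivRatio f i * derivRatio f 1 := by
  simp only [derivRatio, Function.iterate_succ_apply', Function.iterate_zero_apply, map_neg,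
    Derivation.leibniz, smul_eq_mul, derivative_inv']
  ring

theorem derivRatio_eq_one {f : K⟦X⟧} {r : ℕ} (hf : constantCoeff f ≠ 0)
    (hr : (d⁄dX K)^[r] f = -f) : derivRatio f r = 1 := by
  rw [derivRatio, hr, neg_neg, PowerSeries.mul_inv_cancel f hf]

theorem constantCoeff_derivRatio {f : K⟦X⟧} {i : ℕ}
    (hi : constantCoeff ((d⁄dX K)^[i] f) = 0) : constantCoeff (derivRatio f i) = 0 := by
  rw [derivRatio, map_mul, map_neg, hi, neg_zero, zero_mul]

theorem derivative_eq_derivRatio_one {f L : K⟦X⟧} (hf : constantCoeff f ≠ 0)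
    (hL : f * d⁄dX K L = -d⁄dX K f) : d⁄dX K L = derivRatio f 1 := by
  rw [derivRatio, Function.iterate_one, ← hL, mul_comm f, mul_assoc,
    PowerSeries.mul_inv_cancel f hf, mul_one]

end DerivRatio

structure IsRiccatiSystem {R : Type*} [CommSemiring R] (r : ℕ) (g : ℕ → R⟦X⟧) : Prop where
  eq_one : g r = 1
  derivative_eq : ∀ i < r, d⁄dX R (g i) = g (i + 1) + g i * g 1
  constantCoeff_eq_zero : ∀ i, 0 < i → i < r → constantCoeff (g i) = 0

theorem isRiccatiSystem_derivRatio {K : Type*} [Field K] {f : K⟦X⟧} {r : ℕ}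
    (hf : constantCoeff f ≠ 0) (hr : (d⁄dX K)^[r] f = -f)
    (h0 : ∀ i, 0 < i → i < r → constantCoeff ((d⁄dX K)^[i] f) = 0) :
    IsRiccatiSystem r (derivRatio f) where
  eq_one := derivRatio_eq_one hf hr
  derivative_eq i _ := derivative_derivRatio f i
  constantCoeff_eq_zero i hi hir := constantCoeff_derivRatio (h0 i hi hir)

namespace IsRiccatiSystem

theorem coeff_succ_mul {R : Type*} [CommSemiring R] {r : ℕ} {g : ℕ → R⟦X⟧}
    (hg : IsRiccatiSystem r g) {i : ℕ} (hi : i < r) (n : ℕ) :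
    coeff (n + 1) (g i) * (n + 1) =
      coeff n (g (i + 1)) + ∑ p ∈ antidiagonal n, coeff p.1 (g i) * coeff p.2 (g 1) := by
  rw [← coeff_derivative, hg.derivative_eq i hi, map_add, coeff_mul]

variable {R : Type*} [CommSemiring R] [LinearOrder R] [IsStrictOrderedRing R] {r : ℕ}
  {g : ℕ → R⟦X⟧}

theorem coeff_nonneg (hg : IsRiccatiSystem r g) (n : ℕ) {i : ℕ} (hi : 0 < i) (hir : i ≤ r) :
    0 ≤ coeff n (g i) := by
  induction n using Nat.strong_induction_on generalizing i with
  | _ n ih =>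
  obtain rfl | hir := hir.eq_or_lt
  · rw [hg.eq_one, coeff_one]
    split_ifs <;> norm_num
  cases n with
  | zero => rw [coeff_zero_eq_constantCoeff_apply, hg.constantCoeff_eq_zero i hi hir]
  | succ n =>
    have hsum : 0 ≤ ∑ p ∈ antidiagonal n, coeff p.1 (g i) * coeff p.2 (g 1) :=
      sum_nonneg fun p hp => by
        have := HasAntidiagonal.mem_antidiagonal.1 hp
        exact mul_nonneg (ih _ (by omega) hi hir.le) (ih _ (by omega) one_pos (by omega))
    have hnext := ih n n.lt_succ_self i.succ_pos hir
    exact nonneg_of_mul_nonneg_left (hg.coeff_succ_mul hir n ▸ add_nonneg hnext hsum)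
      (by positivity)

theorem coeff_pos (hg : IsRiccatiSystem r g) {m n i : ℕ} (hn : 0 < n) (hi : 0 < i) (hir : i < r)
    (him : i + m = r * n) : 0 < coeff m (g i) := by
  induction m using Nat.strong_induction_on generalizing n i with
  | _ m ih =>
  have hrn : r ≤ r * n := Nat.le_mul_of_pos_right r hn
  obtain ⟨m, rfl⟩ : ∃ m', m = m' + 1 := ⟨m - 1, by omega⟩
  have hterm : ∀ p ∈ antidiagonal m, 0 ≤ coeff p.1 (g i) * coeff p.2 (g 1) := fun p _ =>
    mul_nonneg (hg.coeff_nonneg _ hi hir.le) (hg.coeff_nonneg _ one_pos (by omega))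
  have hsum := sum_nonneg hterm
  suffices 0 < coeff m (g (i + 1)) + ∑ p ∈ antidiagonal m, coeff p.1 (g i) * coeff p.2 (g 1)
      from pos_of_mul_pos_left (hg.coeff_succ_mul hir m ▸ this) (by positivity)
  obtain hir' | hr : i + 1 < r ∨ i + 1 = r := (Nat.succ_le_of_lt hir).lt_or_eq
  · exact add_pos_of_pos_of_nonneg (ih m m.lt_succ_self hn i.succ_pos hir' (by omega)) hsum
  obtain rfl | ⟨k, rfl⟩ : n = 1 ∨ ∃ k, n = k + 2 :=
    (Nat.eq_or_lt_of_le hn).imp Eq.symm fun _ => ⟨n - 2, by omega⟩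
  · obtain rfl : m = 0 := by omega
    rw [hr, hg.eq_one, coeff_zero_one]
    exact add_pos_of_pos_of_nonneg one_pos hsum
  have hrk : r * (k + 2) = r * k + r + r := by ring
  -- As `i = r - 1`, the sum contains `coeff (r k + 1) (g i) * coeff (r - 1) (g 1)`.
  have hmem : (r * k + 1, i) ∈ antidiagonal m :=
    HasAntidiagonal.mem_antidiagonal.2 (by simp only; omega)
  refine add_pos_of_nonneg_of_pos (hg.coeff_nonneg _ (by omega) hr.le) ?_
  refine lt_of_lt_of_le ?_ (single_le_sum hterm hmem)
  exact mul_pos (ih _ (by omega) (Nat.succ_pos k) hi hir (by rw [Nat.mul_succ]; omega))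
    (ih _ (by omega) Nat.one_pos one_pos (by omega) (by omega))

end IsRiccatiSystem

end PowerSeries

/-- Let `f(z) = ∑_{n≥0} (-1)^n z^{rn}/(rn)!` with `r ≥ 2`. Then for every `n ≥ 1`, the
coefficient of `z^{rn}/(rn)!` in `-log f(z)` is a positive integer. Here `L = -log f`
is characterized by: `L` has constant term `0` and `f * L' = -f'`. -/
theorem stmt_19 (r : ℕ) (hr : 2 ≤ r)
    (f L : PowerSeries ℚ)
    (hf : f = PowerSeries.mk fun k =>
      if r ∣ k then (-1 : ℚ) ^ (k / r) / (Nat.factorial k : ℚ) else 0)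
    (hL0 : PowerSeries.constantCoeff L = 0)
    (hlog : f * L.derivativeFun = -f.derivativeFun) :
    ∀ n : ℕ, 1 ≤ n → ∃ m : ℤ, 0 < m ∧
      (PowerSeries.coeff (r * n) L) * (Nat.factorial (r * n) : ℚ) = (m : ℚ) := by
  intro n hn
  change f = generalizedCos r at hf
  subst hf
  have hf0 := constantCoeff_generalizedCos r
  have hfH := isHurwitzIntegral_generalizedCos r
  have hLH : IsHurwitzIntegral L :=
    (hfH.of_mul_left hf0 (hlog ▸ hfH.derivative.neg)).of_derivative (hL0 ▸ zero_mem _)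
  have hL' : d⁄dX ℚ L = derivRatio (generalizedCos r) 1 :=
    derivative_eq_derivRatio_one (hf0 ▸ one_ne_zero) hlog
  have hg : IsRiccatiSystem r (derivRatio (generalizedCos r)) :=
    isRiccatiSystem_derivRatio (hf0 ▸ one_ne_zero) (iterate_derivative_generalizedCos (by omega))
      fun i hi hir => constantCoeff_iterate_derivative_generalizedCos hi hir
  have hrn : r ≤ r * n := Nat.le_mul_of_pos_right r hn
  obtain ⟨k, hk⟩ : ∃ k, r * n = k + 1 := ⟨r * n - 1, by omega⟩
  have hpos : 0 < coeff (k + 1) L := by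
    have := hg.coeff_pos (m := k) hn one_pos (by omega) (by omega)
    rw [← hL', coeff_derivative] at this
    exact pos_of_mul_pos_left this (by positivity)
  obtain ⟨m, hm⟩ := Subring.mem_bot.1 (hLH (r * n))
  refine ⟨m, ?_, by rw [mul_comm, hm]⟩
  have : (0 : ℚ) < m := hm ▸ mul_pos (by positivity) (hk ▸ hpos)
  exact_mod_cast this
end
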